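/- arXiv:1802.01712 — 9 statements merged into one kernel-verified Lean document; each statement's English description precedes it below -/
import Mathlib

section
/- Let S = (|S|, ≼, E) where |S| is a finite set, ≼ a partial ordering on |S|, and E a set of unordered pairs of distinct elements of |S|. Let c be the number of connected components of the Hasse diagram of the poset (|S|, ≼), and for each integer n ≥ 0 let C(S,n) be the number of maps φ : |S| → {1,…,n} that are isotone with respect to ≼ and satisfy φ(x) ≠ φ(y) whenever {x,y} ∈ E. Then there is a polynomial f with rational coefficients such that C(S,n) = f(n) for all n ≥ 0, and every prime dividing the denominator of any coefficient of f is at most card(|S|) − c + 1. -/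
/-!
Delete–contract the edges of `E` one at a time: for an edge `{x, y}`, the colourings avoiding it are
all colourings without it minus those with `φ x = φ y`, which are the colourings for the preorder
generated by `r` and `x ~ y`. Passing to it lowers the number `q` of classes of `r` by at least one
unless `x ~ y` already holds, and lowers the number `c` of connected components by at most one, so
`q - c` never increases. Once `E` is empty, the count factors over the components; on a component
with `k` classes the isotone maps into `Fin n` number `∑_{m ≤ k} a_m (n choose m)`, where `a_m`
counts the surjective ones onto `Fin m`, and `k ≤ q - c + 1` since every other component has a
class. Only primes `p ≤ m` divide the denominators of `X choose m`.
-/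

open scoped Classical

/-- The Hasse diagram of a poset `α`: the graph on `α` whose edges are the covering pairs. -/
def hasseGraph (α : Type*) [PartialOrder α] : SimpleGraph α where
  Adj x y := x ⋖ y ∨ y ⋖ x
  symm := ⟨fun _ _ h => h.symm⟩
  loopless := ⟨fun x h => by
    rcases h with h | h <;> exact lt_irrefl x h.lt⟩

/-- `C(S,n)`: the number of maps `φ : |S| → {1,…,n}` that are isotone for `≼` and satisfy
`φ x ≠ φ y` whenever `{x,y} ∈ E` (the edge set of the graph `G`). -/
noncomputable def orderChromaticCount (α : Type*) [PartialOrder α] (G : SimpleGraph α)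
    (n : ℕ) : ℕ :=
  Nat.card {φ : α → Fin n // Monotone φ ∧ ∀ x y : α, G.Adj x y → φ x ≠ φ y}

open Polynomial

def smoothDenSubring (B : ℕ) : Subring ℚ where
  carrier := {q | ∀ p : ℕ, p.Prime → p ∣ q.den → p ≤ B}
  mul_mem' {q r} hq hr p hp hpd := by
    rcases hp.dvd_mul.mp (hpd.trans (Rat.mul_den_dvd q r)) with h | h
    exacts [hq p hp h, hr p hp h]
  one_mem' p hp hpd := absurd (Nat.le_of_dvd one_pos hpd) hp.one_lt.not_ge
  add_mem' {q r} hq hr p hp hpd := by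
    rcases hp.dvd_mul.mp (hpd.trans (Rat.add_den_dvd q r)) with h | h
    exacts [hq p hp h, hr p hp h]
  zero_mem' p hp hpd := absurd (Nat.le_of_dvd one_pos hpd) hp.one_lt.not_ge
  neg_mem' {q} hq p := by simpa only [Rat.neg_den] using hq p

lemma mem_smoothDenSubring {B : ℕ} {q : ℚ} :
    q ∈ smoothDenSubring B ↔ ∀ p : ℕ, p.Prime → p ∣ q.den → p ≤ B := Iff.rfl

lemma smoothDenSubring_mono : Monotone smoothDenSubring :=
  fun _ _ hB _ hq p hp hpd => (hq p hp hpd).trans hB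

lemma inv_factorial_mem_smoothDenSubring (m : ℕ) : (m.factorial : ℚ)⁻¹ ∈ smoothDenSubring m :=
  fun p hp hpd => (hp.dvd_factorial).mp (by rwa [Rat.inv_natCast_den_of_pos m.factorial_pos] at hpd)

noncomputable def smoothDenPolys (B : ℕ) : Subring ℚ[X] := liftsRing (smoothDenSubring B).subtype

lemma mem_smoothDenPolys {B : ℕ} {f : ℚ[X]} :
    f ∈ smoothDenPolys B ↔ ∀ k, f.coeff k ∈ smoothDenSubring B := by
  rw [smoothDenPolys, ← lifts_iff_liftsRing, lifts_iff_coeff_lifts]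
  simp

lemma smoothDenPolys_mono : Monotone smoothDenPolys := fun _ _ hB _ hf =>
  mem_smoothDenPolys.mpr fun k => smoothDenSubring_mono hB (mem_smoothDenPolys.mp hf k)

lemma C_mem_smoothDenPolys {B : ℕ} {q : ℚ} (hq : q ∈ smoothDenSubring B) :
    C q ∈ smoothDenPolys B :=
  (lifts_iff_liftsRing _ _).mp (C_mem_lifts _ (⟨q, hq⟩ : smoothDenSubring B))

lemma X_mem_smoothDenPolys (B : ℕ) : X ∈ smoothDenPolys B :=
  (lifts_iff_liftsRing _ _).mp (X_mem_lifts _)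

noncomputable def binomPoly (m : ℕ) : ℚ[X] := C (m.factorial : ℚ)⁻¹ * descPochhammer ℚ m

lemma eval_binomPoly_natCast (m n : ℕ) : (binomPoly m).eval (n : ℚ) = n.choose m := by
  rw [binomPoly, eval_mul, eval_C, descPochhammer_eval_eq_descFactorial,
    Nat.descFactorial_eq_factorial_mul_choose, Nat.cast_mul,
    inv_mul_cancel_left₀ (by exact_mod_cast m.factorial_ne_zero)]

lemma descPochhammer_mem_smoothDenPolys (B m : ℕ) : descPochhammer ℚ m ∈ smoothDenPolys B := by
  induction m with
  | zero => exact (smoothDenPolys B).one_mem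
  | succ m ih =>
    rw [descPochhammer_succ_right]
    exact mul_mem ih (sub_mem (X_mem_smoothDenPolys B) (natCast_mem _ m))

lemma binomPoly_mem_smoothDenPolys (m : ℕ) : binomPoly m ∈ smoothDenPolys m :=
  mul_mem (C_mem_smoothDenPolys (inv_factorial_mem_smoothDenSubring m))
    (descPochhammer_mem_smoothDenPolys m m)

abbrev RelMonotone {β γ : Type*} [LE γ] (r : β → β → Prop) (φ : β → γ) : Prop :=
  ∀ ⦃a b⦄, r a b → φ a ≤ φ b

lemma relMonotone_comp_orderEmbedding_iff {β γ δ : Type*} [Preorder γ] [Preorder δ]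
    {r : β → β → Prop} (e : γ ↪o δ) {ψ : β → γ} : RelMonotone r (e ∘ ψ) ↔ RelMonotone r ψ := by
  simp only [RelMonotone, Function.comp_apply, e.le_iff_le]

section MonoCount

variable {β : Type*} (r : β → β → Prop)

noncomputable def monoCount (n : ℕ) : ℕ :=
  Nat.card {φ : β → Fin n // RelMonotone r φ}

noncomputable def surjMonoCount (m : ℕ) : ℕ :=
  Nat.card {ψ : β → Fin m // RelMonotone r ψ ∧ Function.Surjective ψ}

lemma surjMonoCount_eq_card_range_eq {δ : Type*} [Preorder δ] {m : ℕ}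
    (e : Fin m ↪o δ) :
    surjMonoCount r m = Nat.card {φ : β → δ // RelMonotone r φ ∧ Set.range φ = Set.range e} := by
  refine Nat.card_eq_of_bijective
    (fun ψ => ⟨e ∘ ψ.1, (relMonotone_comp_orderEmbedding_iff e).mpr ψ.2.1, by
      rw [Set.range_comp, ψ.2.2.range_eq, Set.image_univ]⟩) ⟨?_, ?_⟩
  · intro ψ₁ ψ₂ h
    exact Subtype.ext (e.injective.comp_left (congrArg Subtype.val h))
  · rintro ⟨φ, hmono, hrange⟩
    obtain ⟨ψ, rfl⟩ := Set.range_subset_range_iff_exists_comp.mp hrange.le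
    refine ⟨⟨ψ, (relMonotone_comp_orderEmbedding_iff e).mp hmono, ?_⟩, rfl⟩
    have himage : e '' Set.range ψ = e '' Set.univ := by
      rw [← Set.range_comp, hrange, Set.image_univ]
    exact Set.range_eq_univ.mp (Set.image_injective.mpr e.injective himage)

lemma monoCount_eq_prod {κ : Type*} [Fintype κ] (g : β → κ) (hg : ∀ a b, r a b → g a = g b)
    (n : ℕ) : monoCount r n = ∏ i, monoCount (fun u v : {a // g a = i} => r u v) n := by
  simp only [monoCount]
  rw [← Nat.card_pi]
  refine Nat.card_congr ((Equiv.subtypeEquiv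
    (((Equiv.sigmaFiberEquiv g).symm.arrowCongr (Equiv.refl _)).trans
      (Equiv.piCurry fun _ _ => Fin n)) fun φ => ⟨fun h i => ?_, fun h a b hab => ?_⟩).trans
    Equiv.subtypePiEquivPi)
  · exact fun u v huv => h huv
  · exact @h (g a) ⟨a, rfl⟩ ⟨b, (hg a b hab).symm⟩ hab

variable [Finite β]

lemma monoCount_eq_sum_finset (n : ℕ) :
    monoCount r n = ∑ s : Finset (Fin n), surjMonoCount r s.card := by
  rw [monoCount, ← Nat.card_congr (Equiv.sigmaFiberEquiv
    fun φ : {φ : β → Fin n // RelMonotone r φ} => (Set.range φ.1).toFinset), Nat.card_sigma]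
  refine Finset.sum_congr rfl fun s _ => ?_
  rw [surjMonoCount_eq_card_range_eq r (s.orderEmbOfFin rfl),
    Finset.range_orderEmbOfFin]
  refine Nat.card_congr ((Equiv.subtypeSubtypeEquivSubtypeInter (RelMonotone r)
    (fun φ => (Set.range φ).toFinset = s)).trans (Equiv.subtypeEquivRight fun φ => ?_))
  rw [← Finset.coe_inj, Set.coe_toFinset]

lemma monoCount_eq_sum {K : ℕ} (hK : ∀ m, K < m → surjMonoCount r m = 0) (n : ℕ) :
    monoCount r n = ∑ m ∈ Finset.range (K + 1), surjMonoCount r m * n.choose m := by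
  calc monoCount r n = ∑ m ∈ Finset.range (n + 1), n.choose m • surjMonoCount r m := by
        rw [monoCount_eq_sum_finset, ← Finset.powerset_univ, Finset.sum_powerset_apply_card,
          Finset.card_univ, Fintype.card_fin]
    _ = ∑ m ∈ Finset.range (n + K + 1), surjMonoCount r m * n.choose m := by
        refine Finset.sum_subset (by gcongr; omega) (fun m _ hm => ?_) |>.trans
          (Finset.sum_congr rfl fun m _ => mul_comm _ _)
        simp_all [Nat.choose_eq_zero_of_lt]
    _ = _ := by
        refine (Finset.sum_subset (by gcongr; omega) fun m _ hm => ?_).symm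
        simp_all [hK m (by simpa using hm)]

end MonoCount

lemma card_preimage_singleton_add_card_le {A B : Type*} [Finite A] {π : A → B}
    (hπ : Function.Surjective π) (b : B) :
    Nat.card (π ⁻¹' {b}) + Nat.card B ≤ Nat.card A + 1 := by
  have := Finite.of_surjective π hπ
  have := Fintype.ofFinite B
  have hcard : Nat.card A = ∑ b', Nat.card (π ⁻¹' {b'}) :=
    (Nat.card_congr (Equiv.sigmaFiberEquiv π)).symm.trans Nat.card_sigma
  have hothers := Finset.card_nsmul_le_sum (Finset.univ.erase b) (fun b' => Nat.card (π ⁻¹' {b'})) 1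
    fun b' _ => Nat.one_le_iff_ne_zero.mpr (Nat.card_ne_zero.mpr
      ⟨let ⟨a, ha⟩ := hπ b'; ⟨⟨a, ha⟩⟩, inferInstance⟩)
  rw [hcard, ← Finset.add_sum_erase _ _ (Finset.mem_univ b), Nat.card_eq_fintype_card (α := B),
    ← Finset.card_univ, ← Finset.card_erase_add_one (Finset.mem_univ b)]
  rw [smul_eq_mul, mul_one] at hothers
  omega

lemma Function.FactorsThrough.card_le_card_range {β γ δ : Type*} [Finite β] {f : β → γ}
    {g : β → δ} (hfg : f.FactorsThrough g) (hf : Function.Surjective f) :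
    Nat.card γ ≤ Nat.card (Set.range g) :=
  Nat.card_le_card_of_surjective (f ∘ Set.rangeSplitting g) fun c => by
    obtain ⟨b, rfl⟩ := hf c
    exact ⟨Set.rangeFactorization g b, hfg (Set.apply_rangeSplitting g _)⟩

section Components

variable {α : Type*} [Finite α] (r : α → α → Prop) [IsPreorder α r]

instance : Finite (Antisymmetrization α r) := Quotient.finite _

lemma surjMonoCount_component_eq_zero (i : Quot r) {m : ℕ}
    (hm : Nat.card (Antisymmetrization α r) - Nat.card (Quot r) + 1 < m) :
    surjMonoCount (fun u v : {a // Quot.mk r a = i} => r u v) m = 0 := by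
  refine Nat.card_eq_zero.mpr (Or.inl ⟨fun ⟨ψ, hmono, hsurj⟩ => ?_⟩)
  let π : Antisymmetrization α r → Quot r := Quotient.lift (Quot.mk r) fun _ _ h => Quot.sound h.1
  have hπ : Function.Surjective π := Quot.ind fun a => ⟨toAntisymmetrization r a, rfl⟩
  let g : {a // Quot.mk r a = i} → Antisymmetrization α r := toAntisymmetrization r ∘ Subtype.val
  have hψg : ψ.FactorsThrough g := fun u v huv =>
    le_antisymm (hmono (Quotient.exact huv).1) (hmono (Quotient.exact huv).2)
  have hrange : Set.range g ⊆ π ⁻¹' {i} := by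
    rintro _ ⟨u, rfl⟩
    exact u.2
  have h1 := hψg.card_le_card_range hsurj
  have h2 := Nat.card_mono (Set.toFinite _) hrange
  have h3 := card_preimage_singleton_add_card_le hπ i
  rw [Nat.card_fin] at h1
  omega

theorem exists_smoothDenPolys_monoCount :
    ∃ f ∈ smoothDenPolys (Nat.card (Antisymmetrization α r) - Nat.card (Quot r) + 1),
      ∀ n : ℕ, (monoCount r n : ℚ) = f.eval (n : ℚ) := by
  set B := Nat.card (Antisymmetrization α r) - Nat.card (Quot r) + 1
  have := Fintype.ofFinite (Quot r)
  refine ⟨∏ i : Quot r, ∑ m ∈ Finset.range (B + 1),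
    (surjMonoCount (fun u v : {a // Quot.mk r a = i} => r u v) m : ℚ[X]) * binomPoly m,
    prod_mem fun i _ => sum_mem fun m hm => mul_mem (natCast_mem _ _) ?_, fun n => ?_⟩
  · exact smoothDenPolys_mono (Nat.lt_succ_iff.mp (Finset.mem_range.mp hm))
      (binomPoly_mem_smoothDenPolys m)
  · rw [monoCount_eq_prod r (Quot.mk r) (fun _ _ h => Quot.sound h), Nat.cast_prod, eval_prod]
    refine Finset.prod_congr rfl fun i _ => ?_
    rw [monoCount_eq_sum _ (fun m hm => surjMonoCount_component_eq_zero r i hm), eval_finsetSum]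
    push_cast
    simp only [eval_mul, eval_natCast, eval_binomPoly_natCast, B]

end Components

section Contraction

variable {α : Type*} (r : α → α → Prop) (x y : α)

def contractRel : α → α → Prop :=
  Relation.ReflTransGen fun u v => r u v ∨ u = x ∧ v = y ∨ u = y ∧ v = x

instance : IsPreorder α (contractRel r x y) :=
  inferInstanceAs (IsPreorder α (Relation.ReflTransGen _))

variable {r x y}

lemma le_contractRel {u v : α} (h : r u v) : contractRel r x y u v := .single (.inl h)

lemma relMonotone_contractRel_iff {γ : Type*} [PartialOrder γ] {φ : α → γ} :
    RelMonotone (contractRel r x y) φ ↔ RelMonotone r φ ∧ φ x = φ y := by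
  refine ⟨fun h => ⟨fun u v huv => h (le_contractRel huv), le_antisymm
    (h (.single (.inr (.inl ⟨rfl, rfl⟩)))) (h (.single (.inr (.inr ⟨rfl, rfl⟩))))⟩, ?_⟩
  rintro ⟨hmono, hxy⟩ u v huv
  have hstep : ∀ a b, (r a b ∨ a = x ∧ b = y ∨ a = y ∧ b = x) → φ a ≤ φ b := by
    rintro a b (h | ⟨rfl, rfl⟩ | ⟨rfl, rfl⟩)
    exacts [hmono h, hxy.le, hxy.ge]
  simpa only [Relation.reflTransGen_eq_self] using Relation.ReflTransGen.lift φ hstep u v huv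

variable (r x y) in
lemma exists_quot_lift_contractRel : ∃ H : Quot (contractRel r x y) → Quot r, ∀ u,
    H (Quot.mk _ u) = Function.update id (Quot.mk r y) (Quot.mk r x) (Quot.mk r u) := by
  refine ⟨Quot.lift _ fun u v huv => ?_, fun _ => rfl⟩
  induction huv with
  | refl => rfl
  | tail _ hstep ih =>
    refine ih.trans ?_
    rcases hstep with h | ⟨rfl, rfl⟩ | ⟨rfl, rfl⟩
    · rw [Quot.sound h]
    all_goals simp [Function.update_apply]

lemma card_quot_le_card_quot_contractRel_add_one [Finite α] :
    Nat.card (Quot r) ≤ Nat.card (Quot (contractRel r x y)) + 1 := by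
  obtain ⟨H, hH⟩ := exists_quot_lift_contractRel r x y
  let G : Quot r → Quot (contractRel r x y) := Quot.map id fun _ _ => le_contractRel
  have hHG : ∀ z, H (G z) = Function.update id (Quot.mk r y) (Quot.mk r x) z := Quot.ind hH
  have hG : ∀ a b, a ≠ Quot.mk r y → b ≠ Quot.mk r y → G a = G b → a = b := by
    intro a b ha hb hab
    simpa only [hHG, Function.update_of_ne ha, Function.update_of_ne hb, id] using congrArg H hab
  let F : Quot r → Option (Quot (contractRel r x y)) := fun z =>
    if z = Quot.mk r y then none else some (G z)
  refine (Nat.card_le_card_of_injective F fun a b hab => ?_).trans_eq Finite.card_option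
  by_cases ha : a = Quot.mk r y <;> by_cases hb : b = Quot.mk r y <;>
    simp only [F, ha, hb, if_true, if_false, reduceCtorEq, Option.some_inj] at hab
  · exact ha.trans hb.symm
  · exact hG a b ha hb hab

lemma card_quot_le_card_quot_contractRel [Finite α] (hxy : r x y) :
    Nat.card (Quot r) ≤ Nat.card (Quot (contractRel r x y)) := by
  obtain ⟨H, hH⟩ := exists_quot_lift_contractRel r x y
  refine Nat.card_le_card_of_injective (Quot.map id fun _ _ => le_contractRel)
    (Function.LeftInverse.injective (g := H) (Quot.ind fun u => ?_))
  rw [Quot.map, hH, Function.update_apply]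
  split_ifs with hu
  exacts [hu ▸ Quot.sound hxy, rfl]

lemma card_antisymmetrization_contractRel_add_card_quot_le [Finite α] [IsPreorder α r] :
    Nat.card (Antisymmetrization α (contractRel r x y)) + Nat.card (Quot r) ≤
      Nat.card (Antisymmetrization α r) + Nat.card (Quot (contractRel r x y)) := by
  let F : Antisymmetrization α r → Antisymmetrization α (contractRel r x y) :=
    Quotient.map (sa := AntisymmRel.setoid α r) (sb := AntisymmRel.setoid α (contractRel r x y)) id
      fun _ _ h => ⟨le_contractRel h.1, le_contractRel h.2⟩
  have hF : Function.Surjective F := Quotient.ind fun a => ⟨toAntisymmetrization r a, rfl⟩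
  by_cases hxy : AntisymmRel r x y
  · have := Nat.card_le_card_of_surjective F hF
    have := card_quot_le_card_quot_contractRel (x := x) (y := y) hxy.1
    omega
  · have hFxy : F (toAntisymmetrization r x) = F (toAntisymmetrization r y) :=
      Quotient.sound ⟨.single (.inr (.inl ⟨rfl, rfl⟩)), .single (.inr (.inr ⟨rfl, rfl⟩))⟩
    have := Fintype.ofFinite (Antisymmetrization α r)
    have := Fintype.ofFinite (Antisymmetrization α (contractRel r x y))
    have := Fintype.card_lt_of_surjective_not_injective F hF fun hinj =>
      hxy (Quotient.exact (hinj hFxy))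
    have := card_quot_le_card_quot_contractRel_add_one (r := r) (x := x) (y := y)
    simp only [Nat.card_eq_fintype_card] at *
    omega

end Contraction

lemma Nat.card_subtype_eq_card_and_add_card_and_not {γ : Type*} [Finite γ] (p q : γ → Prop) :
    Nat.card {x // p x} = Nat.card {x // p x ∧ q x} + Nat.card {x // p x ∧ ¬ q x} := by
  rw [← Nat.card_sum]
  exact Nat.card_congr ((Equiv.sumCompl fun x : {x // p x} => q x).symm.trans
    (Equiv.sumCongr (Equiv.subtypeSubtypeEquivSubtypeInter p q)
      (Equiv.subtypeSubtypeEquivSubtypeInter p fun x => ¬ q x)))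

section DeletionContraction

variable {α : Type*}

noncomputable def orderColoringCount (r : α → α → Prop) (E : Finset (α × α)) (n : ℕ) : ℕ :=
  Nat.card {φ : α → Fin n // RelMonotone r φ ∧ ∀ e ∈ E, φ e.1 ≠ φ e.2}

lemma orderColoringCount_empty (r : α → α → Prop) (n : ℕ) :
    orderColoringCount r ∅ n = monoCount r n :=
  Nat.card_congr (Equiv.subtypeEquivRight fun φ => by simp)

lemma orderColoringCount_insert [Finite α] (r : α → α → Prop) (E : Finset (α × α)) (e : α × α)
    (n : ℕ) : orderColoringCount r (insert e E) n + orderColoringCount (contractRel r e.1 e.2) E n =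
      orderColoringCount r E n := by
  refine Eq.trans ?_
    (Nat.card_subtype_eq_card_and_add_card_and_not _ fun φ : α → Fin n => φ e.1 ≠ φ e.2).symm
  congr 1 <;> refine Nat.card_congr (Equiv.subtypeEquivRight fun φ => ?_)
  · rw [Finset.forall_mem_insert]
    tauto
  · rw [relMonotone_contractRel_iff, not_ne_iff]
    tauto

theorem exists_smoothDenPolys_orderColoringCount [Finite α] (E : Finset (α × α))
    (r : α → α → Prop) [IsPreorder α r] :
    ∃ f ∈ smoothDenPolys (Nat.card (Antisymmetrization α r) - Nat.card (Quot r) + 1),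
      ∀ n : ℕ, (orderColoringCount r E n : ℚ) = f.eval (n : ℚ) := by
  induction E using Finset.induction generalizing r with
  | empty => simpa only [orderColoringCount_empty] using exists_smoothDenPolys_monoCount r
  | insert e E _ ih =>
    obtain ⟨f, hf, hfE⟩ := ih r
    obtain ⟨g, hg, hgE⟩ := ih (contractRel r e.1 e.2)
    have := card_antisymmetrization_contractRel_add_card_quot_le (r := r) (x := e.1) (y := e.2)
    refine ⟨f - g, sub_mem hf (smoothDenPolys_mono (by omega) hg), fun n => ?_⟩
    rw [eval_sub, ← hfE, ← hgE, ← orderColoringCount_insert r E e n]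
    push_cast
    ring

end DeletionContraction

lemma Nat.card_quot_eq_of_eqvGen_eq {α : Type*} {r s : α → α → Prop}
    (h : Relation.EqvGen r = Relation.EqvGen s) : Nat.card (Quot r) = Nat.card (Quot s) :=
  Nat.card_congr
    { toFun := Quot.lift (Quot.mk s) fun a b hab => Quot.eqvGen_sound (h ▸ .rel a b hab)
      invFun := Quot.lift (Quot.mk r) fun a b hab => Quot.eqvGen_sound (h ▸ .rel a b hab)
      left_inv := Quot.ind fun _ => rfl
      right_inv := Quot.ind fun _ => rfl }

section Hasse

variable {α : Type*} [Fintype α] [PartialOrder α]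

lemma eqvGen_le_eq_reachable_hasseGraph :
    Relation.EqvGen (· ≤ · : α → α → Prop) = (hasseGraph α).Reachable := by
  have : LocallyFiniteOrder α := Fintype.toLocallyFiniteOrder
  have hle : (· ≤ · : α → α → Prop) = Relation.ReflTransGen (· ⋖ ·) := by
    ext a b
    exact le_iff_reflTransGen_covBy
  rw [hle, Relation.EqvGen.eqvGen_reflTransGen, SimpleGraph.reachable_eq_reflTransGen,
    ← Relation.EqvGen.reflTransGen_symmGen]
  rfl

lemma card_quot_le_eq_card_connectedComponent_hasseGraph :
    Nat.card (Quot (· ≤ · : α → α → Prop)) = Nat.card (hasseGraph α).ConnectedComponent :=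
  Nat.card_quot_eq_of_eqvGen_eq (by
    rw [eqvGen_le_eq_reachable_hasseGraph, (SimpleGraph.reachable_is_equivalence _).eqvGen_eq])

lemma card_antisymmetrization_le :
    Nat.card (Antisymmetrization α (· ≤ ·)) = Fintype.card α :=
  (Nat.card_eq_of_bijective (toAntisymmetrization (· ≤ ·))
    ⟨fun _ _ h => antisymmRel_iff_eq.mp (Quotient.exact h),
      Quotient.ind fun a => ⟨a, rfl⟩⟩).symm.trans Nat.card_eq_fintype_card

end Hasse

lemma orderChromaticCount_eq_orderColoringCount {α : Type*} [Fintype α] [PartialOrder α]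
    (G : SimpleGraph α) (n : ℕ) :
    orderChromaticCount α G n =
      orderColoringCount (· ≤ ·) (Finset.univ.filter fun e : α × α => G.Adj e.1 e.2) n :=
  Nat.card_congr (Equiv.subtypeEquivRight fun φ => by simp [RelMonotone, Monotone])

/-- Theorem 1. For `S = (|S|, ≼, E)` with `|S|` finite, the function
`n ↦ C(S,n)` is given by a polynomial with rational coefficients, all primes dividing the
denominators of whose coefficients are at most `card |S| − c + 1`, where `c` is the number of
connected components of the Hasse diagram of `(|S|, ≼)`. -/
theorem orderChromaticCount_polynomial (α : Type*) [Fintype α] [PartialOrder α]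
    (G : SimpleGraph α) :
    ∃ f : Polynomial ℚ,
      (∀ n : ℕ, (orderChromaticCount α G n : ℚ) = f.eval (n : ℚ)) ∧
      ∀ k p : ℕ, p.Prime → p ∣ (f.coeff k).den →
        p ≤ Fintype.card α - Nat.card (hasseGraph α).ConnectedComponent + 1 := by
  obtain ⟨f, hf, hcount⟩ := exists_smoothDenPolys_orderColoringCount
    (Finset.univ.filter fun e : α × α => G.Adj e.1 e.2) (· ≤ ·)
  rw [card_antisymmetrization_le, card_quot_le_eq_card_connectedComponent_hasseGraph] at hf
  refine ⟨f, fun n => ?_, fun k => mem_smoothDenSubring.mp (mem_smoothDenPolys.mp hf k)⟩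
  rw [orderChromaticCount_eq_orderColoringCount, hcount]
end

section
/- Let S = (|S|, ≼, E) be as above, c the number of connected components of the Hasse diagram of (|S|, ≼), and p a prime with p > card(|S|) − c + 1. Then for every positive integer n whose residue modulo p is strictly less than the chromatic number of the graph (|S|, E), the integer C(S,n) is divisible by p. In particular, if |S| is nonempty, then p divides C(S,n) whenever p divides n. -/
open scoped Classical

/-!
Inclusion–exclusion over the sets `F ⊆ E` writes `C(S,n)` as an alternating sum of the numbers
`N_F(n)` of monotone maps `|S| → {1,…,n}` that are constant on the edges of `F`. Such maps split
over the connected components `K` of the Hasse diagram with the edges of `F` added, and the factor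
of `K` is `∑ⱼ (n choose j) sⱼ`, where `sⱼ` counts those maps on `K` onto `{1,…,j}`. Spanning `K`
by Hasse edges and `F`-edges shows that such a map takes at most `|K| - c_K + 1 ≤ |S| - c + 1 < p`
values, `c_K` being the number of Hasse components inside `K`; so only `j < p` contributes, and
by Lucas `(n choose j) ≡ (n mod p choose j)` for those `j`. Hence `C(S,n) ≡ C(S, n mod p)`, which
vanishes when `n mod p` colours cannot separate the pairs of `E`.
-/

open Finset Function

theorem sum_range_choose_mul_eq_of_eq_zero {p : ℕ} {s : ℕ → ℕ} (hs : ∀ j, p ≤ j → s j = 0)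
    (m : ℕ) : ∑ j ∈ range (m + 1), m.choose j * s j = ∑ j ∈ range p, m.choose j * s j := by
  calc ∑ j ∈ range (m + 1), m.choose j * s j = ∑ j ∈ range (m + 1 + p), m.choose j * s j := by
        refine sum_subset (range_mono (by omega)) fun j _ hj => ?_
        rw [Nat.choose_eq_zero_of_lt (by simpa using hj), zero_mul]
    _ = ∑ j ∈ range p, m.choose j * s j := by
        refine (sum_subset (range_mono (by omega)) fun j _ hj => ?_).symm
        rw [hs j (by simpa using hj), mul_zero]

theorem natCast_choose_eq_choose_mod {p : ℕ} [Fact p.Prime] {j : ℕ} (hj : j < p) (n : ℕ) :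
    (n.choose j : ZMod p) = ((n % p).choose j : ZMod p) := by
  have h := Choose.choose_modEq_choose_mod_mul_choose_div_nat (n := n) (k := j) (p := p)
  rw [Nat.mod_eq_of_lt hj, Nat.div_eq_of_lt hj, Nat.choose_zero_right, mul_one] at h
  exact (ZMod.natCast_eq_natCast_iff _ _ _).2 h

section MonotoneRespecting

variable {β γ δ : Type*} [Preorder β] [Preorder γ] [Preorder δ]

def MonotoneRespecting (r : β → β → Prop) (ψ : β → γ) : Prop :=
  Monotone ψ ∧ ∀ ⦃x y⦄, r x y → ψ x = ψ y

theorem OrderEmbedding.monotoneRespecting_comp_iff {r : β → β → Prop} (e : γ ↪o δ) {ψ : β → γ} :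
    MonotoneRespecting r (e ∘ ψ) ↔ MonotoneRespecting r ψ := by
  simp only [MonotoneRespecting, Monotone, comp_apply, e.le_iff_le, e.injective.eq_iff]

variable [Fintype β] (r : β → β → Prop)

noncomputable def monotoneRespectingImageEquiv {n : ℕ} (T : Finset (Fin n)) :
    {ψ : β → Fin #T // MonotoneRespecting r ψ ∧ Surjective ψ} ≃
      {ψ : β → Fin n // MonotoneRespecting r ψ ∧ univ.image ψ = T} := by
  set e := T.orderEmbOfFin rfl
  have hT : (T : Set (Fin n)) = Set.range e := (T.range_orderEmbOfFin rfl).symm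
  refine Equiv.ofBijective (fun ψ => ⟨e ∘ ψ, e.monotoneRespecting_comp_iff.2 ψ.2.1, ?_⟩) ⟨?_, ?_⟩
  · rw [← coe_inj, coe_image, coe_univ, Set.image_univ, Set.range_comp, ψ.2.2.range_eq,
      Set.image_univ, hT]
  · intro ψ ψ' h
    exact Subtype.ext (e.injective.comp_left (congrArg Subtype.val h))
  · rintro ⟨ψ, hψ, himg⟩
    have hrange : Set.range ψ = Set.range e := by
      have := congrArg ((↑) : Finset (Fin n) → Set (Fin n)) himg
      rwa [coe_image, coe_univ, Set.image_univ, hT] at this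
    obtain ⟨ψ', rfl⟩ := Set.range_subset_range_iff_exists_comp.1 hrange.subset
    refine ⟨⟨ψ', e.monotoneRespecting_comp_iff.1 hψ, ?_⟩, rfl⟩
    rw [Set.range_comp, ← Set.image_univ (f := e)] at hrange
    exact Set.range_eq_univ.1 (Set.image_injective.2 e.injective hrange)

theorem card_monotoneRespecting_eq_sum_choose_mul (n : ℕ) :
    Nat.card {ψ : β → Fin n // MonotoneRespecting r ψ} =
      ∑ j ∈ range (n + 1),
        n.choose j * Nat.card {ψ : β → Fin j // MonotoneRespecting r ψ ∧ Surjective ψ} := by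
  calc Nat.card {ψ : β → Fin n // MonotoneRespecting r ψ}
      = ∑ T : Finset (Fin n),
          Nat.card {ψ : β → Fin n // MonotoneRespecting r ψ ∧ univ.image ψ = T} := by
        rw [← Nat.card_sigma]
        exact Nat.card_congr <|
          (Equiv.sigmaFiberEquiv fun ψ : {ψ // MonotoneRespecting r ψ} => univ.image ψ.1).symm.trans
            (Equiv.sigmaCongrRight fun T =>
              Equiv.subtypeSubtypeEquivSubtypeInter _ (univ.image · = T))
    _ = ∑ T ∈ (univ : Finset (Fin n)).powerset,
          Nat.card {ψ : β → Fin #T // MonotoneRespecting r ψ ∧ Surjective ψ} := by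
        rw [powerset_univ]
        exact sum_congr rfl fun T _ => (Nat.card_congr (monotoneRespectingImageEquiv r T)).symm
    _ = _ := by
        rw [sum_powerset_apply_card
          (fun j => Nat.card {ψ : β → Fin j // MonotoneRespecting r ψ ∧ Surjective ψ})]
        simp

theorem natCast_card_monotoneRespecting_eq_mod_of_forall_surjective {p : ℕ} [Fact p.Prime]
    (hsmall : ∀ j (ψ : β → Fin j), MonotoneRespecting r ψ → Surjective ψ → j < p) (n : ℕ) :
    (Nat.card {ψ : β → Fin n // MonotoneRespecting r ψ} : ZMod p) =
      Nat.card {ψ : β → Fin (n % p) // MonotoneRespecting r ψ} := by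
  have hs : ∀ j, p ≤ j →
      Nat.card {ψ : β → Fin j // MonotoneRespecting r ψ ∧ Surjective ψ} = 0 := fun j hj =>
    Nat.card_eq_zero.2 (.inl ⟨fun ψ => (hsmall j ψ.1 ψ.2.1 ψ.2.2).not_ge hj⟩)
  simp only [card_monotoneRespecting_eq_sum_choose_mul,
    sum_range_choose_mul_eq_of_eq_zero hs, Nat.cast_sum, Nat.cast_mul]
  exact sum_congr rfl fun j hj => by rw [natCast_choose_eq_choose_mod (mem_range.1 hj)]

end MonotoneRespecting

section Fibres

variable {β γ ι : Type*} [Preorder β] [Preorder γ] {r : β → β → Prop} {c : β → ι}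

theorem monotoneRespecting_iff_forall_fibre (hle : ∀ ⦃x y⦄, x ≤ y → c x = c y)
    (hr : ∀ ⦃x y⦄, r x y → c x = c y) {ψ : β → γ} :
    MonotoneRespecting r ψ ↔
      ∀ i, MonotoneRespecting (fun x y : {x // c x = i} => r x y) fun x => ψ x := by
  refine ⟨fun h i => ⟨fun x y hxy => h.1 hxy, fun x y hxy => h.2 hxy⟩, fun h => ⟨?_, ?_⟩⟩
  · intro x y hxy
    exact (h (c x)).1 (show (⟨x, rfl⟩ : {z // c z = c x}) ≤ ⟨y, (hle hxy).symm⟩ from hxy)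
  · intro x y hxy
    exact (h (c x)).2 (x := (⟨x, rfl⟩ : {z // c z = c x})) (y := ⟨y, (hr hxy).symm⟩) hxy

theorem card_monotoneRespecting_eq_prod_fibre [Fintype ι] (hle : ∀ ⦃x y⦄, x ≤ y → c x = c y)
    (hr : ∀ ⦃x y⦄, r x y → c x = c y) :
    Nat.card {ψ : β → γ // MonotoneRespecting r ψ} =
      ∏ i, Nat.card {ψ : {x // c x = i} → γ //
        MonotoneRespecting (fun x y : {x // c x = i} => r x y) ψ} := by
  let e : (β → γ) ≃ ∀ i, {x // c x = i} → γ :=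
    (Equiv.arrowCongr (Equiv.sigmaFiberEquiv c).symm (Equiv.refl γ)).trans
      (Equiv.piCurry fun _ _ => γ)
  rw [← Nat.card_pi]
  exact Nat.card_congr <| (e.subtypeEquiv fun ψ => monotoneRespecting_iff_forall_fibre hle hr).trans
    (Equiv.subtypePiEquivPi (p := fun i ψ => MonotoneRespecting _ ψ))

end Fibres

theorem Finset.card_image_insert_le_of_mem {α γ : Type*} [DecidableEq α] [DecidableEq γ]
    {S : Finset α} {u : α} (hu : u ∈ S) (f : α → γ) (v : α) :
    #((insert v S).image f) ≤ #(S.image f) + if f v = f u then 0 else 1 := by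
  rw [image_insert]
  split_ifs with h
  · rw [h, insert_eq_of_mem (mem_image_of_mem f hu), add_zero]
  · exact card_insert_le _ _

theorem Set.ncard_range_le {V γ : Type*} [Finite V] (f : V → γ) :
    (Set.range f).ncard ≤ Nat.card V := by
  rw [← Set.image_univ, ← Set.ncard_univ]
  exact Set.ncard_image_le Set.finite_univ

/-- Grow a set of vertices along edges: each new vertex adds a value to at most one of `f`, `g`. -/
theorem SimpleGraph.Connected.ncard_range_add_ncard_range_le {V γ δ : Type*} [Finite V]
    {H : SimpleGraph V} (hH : H.Connected) (f : V → γ) (g : V → δ)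
    (hfg : ∀ ⦃x y⦄, H.Adj x y → f x = f y ∨ g x = g y) :
    (Set.range f).ncard + (Set.range g).ncard ≤ Nat.card V + 1 := by
  have := Fintype.ofFinite V
  simp only [← Set.image_univ, ← coe_univ, ← coe_image, Set.ncard_coe_finset,
    Nat.card_eq_fintype_card]
  obtain ⟨v₀⟩ := hH.nonempty
  suffices ∀ k, 1 ≤ k → k ≤ Fintype.card V →
      ∃ S : Finset V, #S = k ∧ #(S.image f) + #(S.image g) ≤ k + 1 by
    obtain ⟨S, hS, hfgS⟩ := this _ (Fintype.card_pos_iff.2 ⟨v₀⟩) le_rfl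
    rwa [eq_univ_of_card S hS] at hfgS
  intro k hk
  induction k, hk using Nat.le_induction with
  | base => exact fun _ => ⟨{v₀}, card_singleton _, by simp⟩
  | succ k hk ih =>
    intro hkV
    obtain ⟨S, hS, hfgS⟩ := ih (by omega)
    obtain ⟨u, hu⟩ := card_pos.1 (hS ▸ hk)
    obtain ⟨w, -, hw⟩ := exists_mem_notMem_of_card_lt_card (s := S) (t := univ)
      (by rw [hS, card_univ]; omega)
    obtain ⟨d, -, hdS, hdw⟩ := (hH.preconnected u w).some.exists_boundary_dart S hu hw
    refine ⟨insert d.snd S, by rw [card_insert_of_notMem hdw, hS], ?_⟩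
    have hf := card_image_insert_le_of_mem hdS f d.snd
    have hg := card_image_insert_le_of_mem hdS g d.snd
    rcases hfg d.adj.symm with h | h
    · rw [if_pos h] at hf
      split_ifs at hg <;> omega
    · rw [if_pos h] at hg
      split_ifs at hf <;> omega

theorem SimpleGraph.card_connectedComponent_eq_sum_of_le {V : Type*} [Fintype V]
    {G G' : SimpleGraph V} (h : G ≤ G') :
    Nat.card G.ConnectedComponent = ∑ K : G'.ConnectedComponent,
      (Set.range fun x : {x // G'.connectedComponentMk x = K} =>
        G.connectedComponentMk x).ncard := by
  let m := ConnectedComponent.map (Hom.ofLE h)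
  have hfibre : ∀ K C, m C = K ↔
      C ∈ Set.range fun x : {x // G'.connectedComponentMk x = K} => G.connectedComponentMk x := by
    intro K C
    induction C using ConnectedComponent.ind with | h v => ?_
    simp only [m, ConnectedComponent.map_mk, Set.mem_range, Subtype.exists]
    constructor
    · rintro rfl
      exact ⟨v, rfl, rfl⟩
    · rintro ⟨x, rfl, hx⟩
      exact ConnectedComponent.sound ((ConnectedComponent.exact hx).mono h).symm
  rw [← Nat.card_congr (Equiv.sigmaFiberEquiv m), Nat.card_sigma]
  exact sum_congr rfl fun K _ => by
    rw [Nat.card_congr (Equiv.subtypeEquivRight (hfibre K)), Nat.card_coe_set_eq]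

theorem hasseGraph_reachable_of_le {α : Type*} [PartialOrder α] [LocallyFiniteOrder α] {x y : α}
    (h : x ≤ y) : (hasseGraph α).Reachable x y := by
  rw [SimpleGraph.reachable_iff_reflTransGen]
  exact Relation.ReflTransGen.mono (fun _ _ => Or.inl) _ _ (le_iff_reflTransGen_covBy.1 h)

section HasseWith

variable {α : Type*} [PartialOrder α] (r : α → α → Prop)

def hasseGraphWith : SimpleGraph α := hasseGraph α ⊔ SimpleGraph.fromRel r

variable {r}

theorem hasseGraphWith_mk_eq_of_le [Fintype α] ⦃x y : α⦄ (h : x ≤ y) :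
    (hasseGraphWith r).connectedComponentMk x = (hasseGraphWith r).connectedComponentMk y := by
  have := Fintype.toLocallyFiniteOrder (α := α)
  exact SimpleGraph.ConnectedComponent.sound ((hasseGraph_reachable_of_le h).mono le_sup_left)

theorem hasseGraphWith_mk_eq_of_rel ⦃x y : α⦄ (h : r x y) :
    (hasseGraphWith r).connectedComponentMk x = (hasseGraphWith r).connectedComponentMk y := by
  rcases eq_or_ne x y with rfl | hxy
  · rfl
  · exact SimpleGraph.ConnectedComponent.sound (SimpleGraph.Adj.reachable (Or.inr ⟨hxy, .inl h⟩))

theorem ncard_range_add_ncard_range_hasse_le [Finite α]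
    (K : (hasseGraphWith r).ConnectedComponent) {γ : Type*}
    {ψ : {x // (hasseGraphWith r).connectedComponentMk x = K} → γ}
    (hψ : ∀ ⦃x y : {x // (hasseGraphWith r).connectedComponentMk x = K}⦄, r x y → ψ x = ψ y) :
    (Set.range ψ).ncard + (Set.range fun x : {x // (hasseGraphWith r).connectedComponentMk x = K} =>
      (hasseGraph α).connectedComponentMk x).ncard ≤
      Nat.card {x // (hasseGraphWith r).connectedComponentMk x = K} + 1 := by
  refine K.connected_toSimpleGraph.ncard_range_add_ncard_range_le _ _ fun x y hxy => ?_
  rcases hxy with hxy | ⟨-, hxy | hxy⟩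
  · exact .inr (SimpleGraph.ConnectedComponent.sound hxy.reachable)
  · exact .inl (hψ hxy)
  · exact .inl (hψ hxy).symm

end HasseWith

theorem card_sub_ncard_range_hasse_le {α : Type*} [Fintype α] [PartialOrder α]
    {r : α → α → Prop} (K : (hasseGraphWith r).ConnectedComponent) :
    Nat.card {x // (hasseGraphWith r).connectedComponentMk x = K} -
        (Set.range fun x : {x // (hasseGraphWith r).connectedComponentMk x = K} =>
          (hasseGraph α).connectedComponentMk x).ncard ≤
      Nat.card α - Nat.card (hasseGraph α).ConnectedComponent := by
  let a (K : (hasseGraphWith r).ConnectedComponent) :=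
    Nat.card {x // (hasseGraphWith r).connectedComponentMk x = K}
  let b (K : (hasseGraphWith r).ConnectedComponent) :=
    (Set.range fun x : {x // (hasseGraphWith r).connectedComponentMk x = K} =>
      (hasseGraph α).connectedComponentMk x).ncard
  calc a K - b K ≤ ∑ K', (a K' - b K') :=
        single_le_sum (f := fun K => a K - b K) (fun _ _ => Nat.zero_le _) (mem_univ K)
    _ = ∑ K', a K' - ∑ K', b K' := sum_tsub_distrib _ fun K _ => Set.ncard_range_le _
    _ = _ := by
        rw [SimpleGraph.card_connectedComponent_eq_sum_of_le
            (le_sup_left : hasseGraph α ≤ hasseGraphWith r),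
          ← Nat.card_congr (Equiv.sigmaFiberEquiv (hasseGraphWith r).connectedComponentMk),
          Nat.card_sigma]
        rfl

theorem natCast_card_monotoneRespecting_eq_mod {α : Type*} [Fintype α] [PartialOrder α]
    {p : ℕ} [Fact p.Prime]
    (hp : Fintype.card α - Nat.card (hasseGraph α).ConnectedComponent + 1 < p)
    (r : α → α → Prop) (n : ℕ) :
    (Nat.card {φ : α → Fin n // MonotoneRespecting r φ} : ZMod p) =
      Nat.card {φ : α → Fin (n % p) // MonotoneRespecting r φ} := by
  have hsplit (m : ℕ) := card_monotoneRespecting_eq_prod_fibre (γ := Fin m)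
    (c := (hasseGraphWith r).connectedComponentMk) hasseGraphWith_mk_eq_of_le
    hasseGraphWith_mk_eq_of_rel
  rw [hsplit, hsplit, Nat.cast_prod, Nat.cast_prod]
  refine prod_congr rfl fun K _ =>
    natCast_card_monotoneRespecting_eq_mod_of_forall_surjective _ (fun j ψ hψ hψs => ?_) n
  have himage := ncard_range_add_ncard_range_hasse_le K hψ.2
  rw [hψs.range_eq, Set.ncard_univ, Nat.card_eq_fintype_card, Fintype.card_fin] at himage
  have := card_sub_ncard_range_hasse_le K
  rw [Nat.card_eq_fintype_card (α := α)] at this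
  omega

theorem Sym2.forall_mem_isDiag_map_iff {β γ : Type*} {F : Finset (Sym2 β)} {f : β → γ} :
    (∀ e ∈ F, (e.map f).IsDiag) ↔ ∀ x y, s(x, y) ∈ F → f x = f y := by
  simp only [Sym2.forall, Sym2.map_mk, Sym2.mk_isDiag_iff]

theorem intCast_orderChromaticCount_eq_sum {α : Type*} [Fintype α] [PartialOrder α]
    (G : SimpleGraph α) (n : ℕ) :
    (orderChromaticCount α G n : ℤ) = ∑ F ∈ G.edgeFinset.powerset, (-1 : ℤ) ^ #F *
      Nat.card {φ : α → Fin n // MonotoneRespecting (fun x y => s(x, y) ∈ F) φ} := by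
  let S (e : Sym2 α) : Finset {φ : α → Fin n // Monotone φ} :=
    univ.filter fun φ => (e.map φ.1).IsDiag
  have hcount : orderChromaticCount α G n = #(G.edgeFinset.inf fun e => (S e)ᶜ) := by
    rw [orderChromaticCount, ← Fintype.card_coe, ← Nat.card_eq_fintype_card]
    refine Nat.card_congr ((Equiv.subtypeSubtypeEquivSubtypeInter _ _).symm.trans
      (Equiv.subtypeEquivRight fun φ => ?_))
    simp only [mem_inf, mem_compl, S, mem_filter, mem_univ, true_and, Sym2.forall,
      SimpleGraph.mem_edgeFinset, SimpleGraph.mem_edgeSet, Sym2.map_mk, Sym2.mk_isDiag_iff]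
  have hterm : ∀ F : Finset (Sym2 α),
      Nat.card {φ : α → Fin n // MonotoneRespecting (fun x y => s(x, y) ∈ F) φ} = #(F.inf S) := by
    intro F
    rw [← Fintype.card_coe, ← Nat.card_eq_fintype_card]
    refine Nat.card_congr ((Equiv.subtypeSubtypeEquivSubtypeInter _ _).symm.trans
      (Equiv.subtypeEquivRight fun φ => ?_))
    simp only [mem_inf, S, mem_filter, mem_univ, true_and, Sym2.forall_mem_isDiag_map_iff]
  rw [hcount, inclusion_exclusion_card_inf_compl]
  simp only [hterm]

theorem orderChromaticCount_eq_zero_of_lt_chromaticNumber {α : Type*} [PartialOrder α]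
    {G : SimpleGraph α} {n : ℕ} (h : (n : ℕ∞) < G.chromaticNumber) :
    orderChromaticCount α G n = 0 :=
  Nat.card_eq_zero.2 <| .inl ⟨fun ⟨φ, _, hφ⟩ =>
    h.not_ge (SimpleGraph.Colorable.chromaticNumber_le ⟨⟨φ, hφ _ _⟩⟩)⟩

theorem natCast_orderChromaticCount_eq_mod {α : Type*} [Fintype α] [PartialOrder α]
    (G : SimpleGraph α) {p : ℕ} [Fact p.Prime]
    (hp : Fintype.card α - Nat.card (hasseGraph α).ConnectedComponent + 1 < p) (n : ℕ) :
    (orderChromaticCount α G n : ZMod p) = orderChromaticCount α G (n % p) := by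
  rw [← Int.cast_natCast, intCast_orderChromaticCount_eq_sum, ← Int.cast_natCast (R := ZMod p),
    intCast_orderChromaticCount_eq_sum]
  push_cast
  exact sum_congr rfl fun F _ => by rw [natCast_card_monotoneRespecting_eq_mod hp _ n]

/-- Corollary 2. Let `c` be the number of connected components of the Hasse
diagram of `(|S|, ≼)` and `p` a prime with `p > card |S| − c + 1`. Then for every positive `n`
whose residue mod `p` is less than the chromatic number of the graph `(|S|, E)`, `p` divides
`C(S,n)`; in particular, if `|S|` is nonempty, `p ∣ C(S,n)` whenever `p ∣ n`. -/
theorem orderChromaticCount_divisible (α : Type*) [Fintype α] [PartialOrder α]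
    (G : SimpleGraph α) (p : ℕ) (hp : p.Prime)
    (hbound : Fintype.card α - Nat.card (hasseGraph α).ConnectedComponent + 1 < p) :
    (∀ n : ℕ, 0 < n → ((n % p : ℕ) : ℕ∞) < G.chromaticNumber →
        p ∣ orderChromaticCount α G n) ∧
      (Nonempty α → ∀ n : ℕ, p ∣ n → p ∣ orderChromaticCount α G n) := by
  have : Fact p.Prime := ⟨hp⟩
  have hdvd : ∀ n, ((n % p : ℕ) : ℕ∞) < G.chromaticNumber → p ∣ orderChromaticCount α G n :=
    fun n hn => by
      rw [← ZMod.natCast_eq_zero_iff, natCast_orderChromaticCount_eq_mod G hbound,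
        orderChromaticCount_eq_zero_of_lt_chromaticNumber hn, Nat.cast_zero]
  refine ⟨fun n _ => hdvd n, fun _ n hn => hdvd n ?_⟩
  rw [Nat.mod_eq_zero_of_dvd hn, Nat.cast_zero]
  exact G.colorable_of_fintype.chromaticNumber_pos
end

section
/- Let P be a finite poset equipped with a bicoloring. Then the sign-imbalance L₋(P) of the set of all linearizations of P (relative to any fixed reference bijection) equals the sign-imbalance, relative to the same reference bijection, of the set of linearizations of P compatible with the given bicoloring; that is, the number of even minus the number of odd linearizations of P equals the number of even minus the number of odd compatible linearizations. In particular, if P has no linearization compatible with the bicoloring, then L₋(P) = 0. -/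
open scoped Classical

/-- A linearization `φ` of a finite poset (an isotone bijection onto `Fin (card α)`) is
compatible with a bicoloring `col` if any two consecutive elements of the linearization have
different colors. -/
def CompatibleLin {α : Type*} [Fintype α] [PartialOrder α] (col : α → Bool)
    (φ : α ≃ Fin (Fintype.card α)) : Prop :=
  ∀ i j : Fin (Fintype.card α), (j : ℕ) = (i : ℕ) + 1 → col (φ.symm i) ≠ col (φ.symm j)

/-- successor within `Fin n` (wraps, but we only use it when `i+1 < n`). -/
def finNxt {n : ℕ} (i : Fin n) : Fin n := ⟨((i : ℕ) + 1) % n, Nat.mod_lt _ i.pos⟩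

lemma finNxt_val {n : ℕ} {i : Fin n} (h : (i : ℕ) + 1 < n) :
    ((finNxt i : Fin n) : ℕ) = (i : ℕ) + 1 := Nat.mod_eq_of_lt h

noncomputable def badSet (n : ℕ) (c : Fin n → Bool) : Finset (Fin n) :=
  Finset.univ.filter (fun i => (i : ℕ) + 1 < n ∧ c i = c (finNxt i))

lemma mem_badSet {n : ℕ} {c : Fin n → Bool} {i : Fin n} :
    i ∈ badSet n c ↔ (i : ℕ) + 1 < n ∧ c i = c (finNxt i) := by
  simp [badSet]

lemma swap_mono_aux {n : ℕ} {i j u v : Fin n} (hj : (j : ℕ) = (i : ℕ) + 1)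
    (huv : u < v) (hk : ¬(u = i ∧ v = j)) :
    Equiv.swap i j u ≤ Equiv.swap i j v := by
  have hij : i ≠ j := by
    intro h; rw [h] at hj; omega
  have huv' : (u : ℕ) < (v : ℕ) := huv
  rcases eq_or_ne u i with rfl | hui
  · have hvj : v ≠ j := fun h => hk ⟨rfl, h⟩
    have hvi : v ≠ u := (ne_of_gt huv)
    rw [Equiv.swap_apply_left, Equiv.swap_apply_of_ne_of_ne hvi hvj]
    have h1 : (v : ℕ) ≠ (j : ℕ) := fun h => hvj (Fin.ext h)
    exact Fin.le_def.2 (by omega)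
  rcases eq_or_ne u j with rfl | huj
  · have hvj : v ≠ u := (ne_of_gt huv)
    have hvi : v ≠ i := by
      intro h; rw [h] at huv'; omega
    rw [Equiv.swap_apply_right, Equiv.swap_apply_of_ne_of_ne hvi hvj]
    exact Fin.le_def.2 (by omega)
  · rw [Equiv.swap_apply_of_ne_of_ne hui huj]
    rcases eq_or_ne v i with rfl | hvi
    · rw [Equiv.swap_apply_left]
      exact Fin.le_def.2 (by omega)
    rcases eq_or_ne v j with rfl | hvj
    · rw [Equiv.swap_apply_right]
      have h1 : (u : ℕ) ≠ (i : ℕ) := fun h => hui (Fin.ext h)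
      exact Fin.le_def.2 (by omega)
    · rw [Equiv.swap_apply_of_ne_of_ne hvi hvj]
      exact le_of_lt huv

section Poset

variable {α : Type*} [Fintype α] [PartialOrder α] {col : α → Bool}

lemma not_lt_of_bad (hcol : ∀ x y : α, x ⋖ y → col x ≠ col y)
    {φ : α ≃ Fin (Fintype.card α)} (hm : Monotone ⇑φ)
    {i : Fin (Fintype.card α)} (hi : (i : ℕ) + 1 < Fintype.card α)
    (hc : col (φ.symm i) = col (φ.symm (finNxt i))) :
    ¬(φ.symm i < φ.symm (finNxt i)) := by
  intro hlt
  have hsm : StrictMono ⇑φ := hm.strictMono_of_injective φ.injective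
  have hcov : φ.symm i ⋖ φ.symm (finNxt i) := by
    refine ⟨hlt, ?_⟩
    intro z hz1 hz2
    have h1 : φ (φ.symm i) < φ z := hsm hz1
    have h2 : φ z < φ (φ.symm (finNxt i)) := hsm hz2
    rw [Equiv.apply_symm_apply] at h1 h2
    have h1' : (i : ℕ) < (φ z : ℕ) := h1
    have h2' : ((φ z : Fin _) : ℕ) < ((finNxt i : Fin _) : ℕ) := h2
    rw [finNxt_val hi] at h2'
    omega
  exact hcol _ _ hcov hc

lemma mono_swap (hcol : ∀ x y : α, x ⋖ y → col x ≠ col y)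
    {φ : α ≃ Fin (Fintype.card α)} (hm : Monotone ⇑φ)
    {i : Fin (Fintype.card α)} (hi : (i : ℕ) + 1 < Fintype.card α)
    (hc : col (φ.symm i) = col (φ.symm (finNxt i))) :
    Monotone ⇑(φ.trans (Equiv.swap i (finNxt i))) := by
  intro a b hab
  rcases eq_or_lt_of_le hab with rfl | hab'
  · exact le_rfl
  have hsm : StrictMono ⇑φ := hm.strictMono_of_injective φ.injective
  have huv : φ a < φ b := hsm hab'
  have hkey : ¬(φ a = i ∧ φ b = finNxt i) := by
    rintro ⟨ha, hb⟩
    apply not_lt_of_bad hcol hm hi hc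
    have ha' : φ.symm i = a := by rw [← ha, Equiv.symm_apply_apply]
    have hb' : φ.symm (finNxt i) = b := by rw [← hb, Equiv.symm_apply_apply]
    rw [ha', hb']; exact hab'
  exact swap_mono_aux (finNxt_val hi) huv hkey

omit [PartialOrder α] in
lemma colorseq_swap {φ : α ≃ Fin (Fintype.card α)}
    {i : Fin (Fintype.card α)}
    (hc : col (φ.symm i) = col (φ.symm (finNxt i))) :
    (fun k => col ((φ.trans (Equiv.swap i (finNxt i))).symm k)) =
      (fun k => col (φ.symm k)) := by
  funext k
  simp only [Equiv.symm_trans_apply, Equiv.symm_swap]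
  rcases eq_or_ne k i with rfl | hki
  · rw [Equiv.swap_apply_left]; exact hc.symm
  rcases eq_or_ne k (finNxt i) with rfl | hkj
  · rw [Equiv.swap_apply_right]; exact hc
  · rw [Equiv.swap_apply_of_ne_of_ne hki hkj]

lemma not_compat_iff {φ : α ≃ Fin (Fintype.card α)} :
    ¬CompatibleLin col φ ↔ (badSet _ (fun k => col (φ.symm k))).Nonempty := by
  unfold CompatibleLin
  push_neg
  constructor
  · rintro ⟨i, j, hj, hc⟩
    refine ⟨i, mem_badSet.2 ⟨hj ▸ j.isLt, ?_⟩⟩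
    have : finNxt i = j := Fin.ext (by rw [finNxt_val (hj ▸ j.isLt), hj])
    rw [this]; exact hc
  · rintro ⟨i, hi⟩
    obtain ⟨h1, h2⟩ := mem_badSet.1 hi
    exact ⟨i, finNxt i, finNxt_val h1, h2⟩

end Poset

noncomputable def G {α : Type*} [Fintype α] [PartialOrder α] (col : α → Bool)
    (φ : α ≃ Fin (Fintype.card α)) : α ≃ Fin (Fintype.card α) :=
  if h : (badSet _ (fun k => col (φ.symm k))).Nonempty then
    φ.trans (Equiv.swap ((badSet _ (fun k => col (φ.symm k))).min' h)
      (finNxt ((badSet _ (fun k => col (φ.symm k))).min' h)))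
  else φ

section Poset2

variable {α : Type*} [Fintype α] [PartialOrder α] {col : α → Bool}

lemma G_spec (hcol : ∀ x y : α, x ⋖ y → col x ≠ col y)
    (b : α ≃ Fin (Fintype.card α)) {φ : α ≃ Fin (Fintype.card α)}
    (hm : Monotone ⇑φ) (hnc : ¬CompatibleLin col φ) :
    Monotone ⇑(G col φ) ∧ ¬CompatibleLin col (G col φ) ∧ G col (G col φ) = φ ∧
    ((Equiv.Perm.sign (b.symm.trans (G col φ))) : ℤ) =
      -((Equiv.Perm.sign (b.symm.trans φ)) : ℤ) := by
  have hne := (not_compat_iff (col := col)).1 hnc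
  set I := (badSet _ (fun k => col (φ.symm k))).min' hne with hIdef
  have hI := Finset.min'_mem _ hne
  obtain ⟨hIlt, hIc⟩ := mem_badSet.1 hI
  have hG : G col φ = φ.trans (Equiv.swap I (finNxt I)) := by
    rw [G, dif_pos hne]
  have hcs : (fun k => col ((G col φ).symm k)) = (fun k => col (φ.symm k)) := by
    rw [hG]; exact colorseq_swap hIc
  have hmono : Monotone ⇑(G col φ) := hG ▸ mono_swap hcol hm hIlt hIc
  have hbad : badSet _ (fun k => col ((G col φ).symm k)) =
      badSet _ (fun k => col (φ.symm k)) := by rw [hcs]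
  have hne' : (badSet _ (fun k => col ((G col φ).symm k))).Nonempty := by
    rw [hbad]; exact hne
  have hnc' : ¬CompatibleLin col (G col φ) := (not_compat_iff (col := col)).2 hne'
  have hmin : (badSet _ (fun k => col ((G col φ).symm k))).min' hne' = I := by
    rw [hIdef]; congr 1
  have hGG : G col (G col φ) = φ := by
    rw [G, dif_pos hne', hmin, hG, Equiv.trans_assoc, Equiv.swap_swap, Equiv.trans_refl]
  have hIne : I ≠ finNxt I := by
    intro h
    have h2 := finNxt_val hIlt
    rw [← h] at h2
    omega
  refine ⟨hmono, hnc', hGG, ?_⟩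
  have hasc : b.symm.trans (G col φ) = (b.symm.trans φ).trans (Equiv.swap I (finNxt I)) := by
    rw [hG, Equiv.trans_assoc]
  have hmul : (b.symm.trans φ).trans (Equiv.swap I (finNxt I)) =
      Equiv.swap I (finNxt I) * (b.symm.trans φ) := rfl
  rw [hasc, hmul, map_mul, Equiv.Perm.sign_swap hIne]
  push_cast
  ring

end Poset2


/-- Theorem on bicolored posets. Let `P` be a finite poset with a bicoloring
`col` (whenever one element covers another they have different colors). Then, relative to any
fixed reference bijection `b`, the sign-imbalance of the set of all linearizations of `P`
equals the sign-imbalance of the set of linearizations compatible with the bicoloring.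
In particular, if there is no compatible linearization, then `P` is sign-balanced. -/
theorem signImbalance_eq_signImbalance_of_compatible (α : Type*) [Fintype α] [PartialOrder α]
    (col : α → Bool) (hcol : ∀ x y : α, x ⋖ y → col x ≠ col y)
    (b : α ≃ Fin (Fintype.card α)) :
    (∑ φ : α ≃ Fin (Fintype.card α),
        if Monotone ⇑φ then ((Equiv.Perm.sign (b.symm.trans φ)) : ℤ) else 0) =
      (∑ φ : α ≃ Fin (Fintype.card α),
        if Monotone ⇑φ ∧ CompatibleLin col φ
        then ((Equiv.Perm.sign (b.symm.trans φ)) : ℤ) else 0) ∧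
    ((∀ φ : α ≃ Fin (Fintype.card α), Monotone ⇑φ → ¬ CompatibleLin col φ) →
      (∑ φ : α ≃ Fin (Fintype.card α),
        if Monotone ⇑φ then ((Equiv.Perm.sign (b.symm.trans φ)) : ℤ) else 0) = 0) := by
  have key : ∑ φ ∈ Finset.univ.filter
      (fun φ : α ≃ Fin (Fintype.card α) => Monotone ⇑φ ∧ ¬CompatibleLin col φ),
      ((Equiv.Perm.sign (b.symm.trans φ)) : ℤ) = 0 := by
    have g_mem : ∀ (φ : α ≃ Fin (Fintype.card α))
        (hφ : φ ∈ Finset.univ.filter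
          (fun φ : α ≃ Fin (Fintype.card α) => Monotone ⇑φ ∧ ¬CompatibleLin col φ)),
        G col φ ∈ Finset.univ.filter
          (fun φ : α ≃ Fin (Fintype.card α) => Monotone ⇑φ ∧ ¬CompatibleLin col φ) := by
      intro φ hφ
      obtain ⟨h1, h2⟩ := (Finset.mem_filter.1 hφ).2
      obtain ⟨a, b', -, -⟩ := G_spec hcol b h1 h2
      exact Finset.mem_filter.2 ⟨Finset.mem_univ _, a, b'⟩
    refine Finset.sum_involution (fun φ _ => G col φ) ?_ ?_ g_mem ?_
    · intro φ hφ
      obtain ⟨h1, h2⟩ := (Finset.mem_filter.1 hφ).2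
      obtain ⟨-, -, -, hs⟩ := G_spec hcol b h1 h2
      rw [hs]; ring
    · intro φ hφ hne heq
      obtain ⟨h1, h2⟩ := (Finset.mem_filter.1 hφ).2
      obtain ⟨-, -, -, hs⟩ := G_spec hcol b h1 h2
      rw [heq] at hs
      omega
    · intro φ hφ
      obtain ⟨h1, h2⟩ := (Finset.mem_filter.1 hφ).2
      obtain ⟨-, -, hGG, -⟩ := G_spec hcol b h1 h2
      exact hGG
  have key' : ∑ φ : α ≃ Fin (Fintype.card α),
      (if Monotone ⇑φ ∧ ¬CompatibleLin col φ
        then ((Equiv.Perm.sign (b.symm.trans φ)) : ℤ) else 0) = 0 := by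
    rw [← Finset.sum_filter]; exact key
  have main : (∑ φ : α ≃ Fin (Fintype.card α),
      if Monotone ⇑φ then ((Equiv.Perm.sign (b.symm.trans φ)) : ℤ) else 0) =
      (∑ φ : α ≃ Fin (Fintype.card α),
        if Monotone ⇑φ ∧ CompatibleLin col φ
        then ((Equiv.Perm.sign (b.symm.trans φ)) : ℤ) else 0) := by
    have split : ∀ φ : α ≃ Fin (Fintype.card α),
        (if Monotone ⇑φ then ((Equiv.Perm.sign (b.symm.trans φ)) : ℤ) else 0) =
        (if Monotone ⇑φ ∧ CompatibleLin col φ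
          then ((Equiv.Perm.sign (b.symm.trans φ)) : ℤ) else 0) +
        (if Monotone ⇑φ ∧ ¬CompatibleLin col φ
          then ((Equiv.Perm.sign (b.symm.trans φ)) : ℤ) else 0) := by
      intro φ
      by_cases h1 : Monotone ⇑φ <;> by_cases h2 : CompatibleLin col φ <;> simp [h1, h2]
    rw [Finset.sum_congr rfl (fun φ _ => split φ), Finset.sum_add_distrib, key', add_zero]
  refine ⟨main, fun h => ?_⟩
  rw [main]
  refine Finset.sum_eq_zero (fun φ _ => ?_)
  rw [if_neg]
  rintro ⟨h1, h2⟩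
  exact h φ h1 h2
end

section
/- Let P be a finite poset such that the cardinalities of all maximal chains of P have the same parity, and this parity is opposite to the parity of card(P). Then P is sign-balanced, i.e. L₋(P) = 0. -/
open scoped Classical

/-!
Stanley's promotion argument. Given a linearization `φ`, run a bubble pass: for
`i = 0, …, n - 1`, swap the entries in positions `i` and `i + 1` whenever they are incomparable.
Each step is an involution of the bijections `α ≃ Fin (n + 1)` that preserves linearizations, so
the pass permutes the linearizations. The entry in position `i` after step `i` is carried along
and replaced by a strictly larger one exactly at the steps where no swap occurs; the elements it
visits form a maximal chain `C`, and the pass performs `n + 1 - #C` transpositions. Under the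
parity hypothesis this number is odd, so the pass is a sign-reversing bijection of the
linearizations and the sign-imbalance vanishes.
-/

open Equiv Finset Function Relation

theorem swap_lt_swap_of_lt {m : ℕ} {p q a b : Fin m} (hpq : p ≤ q) (hqp : (q : ℕ) ≤ p + 1)
    (hab : a < b) (h : ¬(a = p ∧ b = q)) : swap p q a < swap p q b := by
  simp only [swap_apply_def, Fin.ext_iff, Fin.lt_def, Fin.le_def] at *
  split_ifs <;> omega

namespace Promotion

variable {α : Type*} [PartialOrder α] {n : ℕ}

/-- Positions are `Fin.clamp i n`, so for `i ≥ n` both are the last position and the move is the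
identity. -/
noncomputable def adjSwap (i : ℕ) (ψ : α ≃ Fin (n + 1)) : α ≃ Fin (n + 1) :=
  if SymmGen (· ≤ ·) (ψ.symm (Fin.clamp i n)) (ψ.symm (Fin.clamp (i + 1) n)) then ψ
  else ψ.trans (swap (Fin.clamp i n) (Fin.clamp (i + 1) n))

theorem adjSwap_of_symmGen {i : ℕ} {ψ : α ≃ Fin (n + 1)}
    (h : SymmGen (· ≤ ·) (ψ.symm (Fin.clamp i n)) (ψ.symm (Fin.clamp (i + 1) n))) :
    adjSwap i ψ = ψ :=
  if_pos h

theorem adjSwap_of_not_symmGen {i : ℕ} {ψ : α ≃ Fin (n + 1)}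
    (h : ¬SymmGen (· ≤ ·) (ψ.symm (Fin.clamp i n)) (ψ.symm (Fin.clamp (i + 1) n))) :
    adjSwap i ψ = ψ.trans (swap (Fin.clamp i n) (Fin.clamp (i + 1) n)) :=
  if_neg h

theorem adjSwap_involutive (i : ℕ) : Involutive (adjSwap (α := α) (n := n) i) := by
  intro ψ
  by_cases h : SymmGen (· ≤ ·) (ψ.symm (Fin.clamp i n)) (ψ.symm (Fin.clamp (i + 1) n))
  · rw [adjSwap_of_symmGen h, adjSwap_of_symmGen h]
  · rw [adjSwap_of_not_symmGen h, adjSwap_of_not_symmGen (by simpa [SymmGen, or_comm] using h)]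
    ext; simp

theorem monotone_adjSwap (i : ℕ) {ψ : α ≃ Fin (n + 1)} (hψ : Monotone ψ) :
    Monotone (adjSwap i ψ) := by
  by_cases h : SymmGen (· ≤ ·) (ψ.symm (Fin.clamp i n)) (ψ.symm (Fin.clamp (i + 1) n))
  · rwa [adjSwap_of_symmGen h]
  rw [adjSwap_of_not_symmGen h]
  refine StrictMono.monotone fun x y hxy => ?_
  refine swap_lt_swap_of_lt (Fin.clamp_monotone (Nat.le_succ i)) ?_
    (hψ.strictMono_of_injective ψ.injective hxy) fun ⟨hx, hy⟩ => h ?_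
  · simp only [Fin.coe_clamp]; omega
  · rw [← hx, ← hy]; simpa using .of_le hxy.le

theorem monotone_adjSwap_iff (i : ℕ) {ψ : α ≃ Fin (n + 1)} :
    Monotone (adjSwap i ψ) ↔ Monotone ψ :=
  ⟨fun h => adjSwap_involutive i ψ ▸ monotone_adjSwap i h, monotone_adjSwap i⟩

noncomputable def bubble : ℕ → (α ≃ Fin (n + 1)) → (α ≃ Fin (n + 1))
  | 0 => id
  | m + 1 => adjSwap m ∘ bubble m

theorem bubble_succ_apply (m : ℕ) (φ : α ≃ Fin (n + 1)) :
    bubble (m + 1) φ = adjSwap m (bubble m φ) :=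
  rfl

theorem bijective_bubble (m : ℕ) : Bijective (bubble (α := α) (n := n) m) := by
  induction m with
  | zero => exact bijective_id
  | succ m ih => exact (adjSwap_involutive m).bijective.comp ih

theorem monotone_bubble_iff (m : ℕ) {φ : α ≃ Fin (n + 1)} :
    Monotone (bubble m φ) ↔ Monotone φ := by
  induction m with
  | zero => rfl
  | succ m ih => rw [bubble_succ_apply, monotone_adjSwap_iff, ih]

theorem bubble_symm_clamp_of_lt {m j : ℕ} (φ : α ≃ Fin (n + 1)) (hmj : m < j) (hj : j ≤ n) :
    (bubble m φ).symm (Fin.clamp j n) = φ.symm (Fin.clamp j n) := by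
  induction m with
  | zero => rfl
  | succ m ih =>
    rw [← ih (by omega), bubble_succ_apply]
    by_cases h : SymmGen (· ≤ ·) ((bubble m φ).symm (Fin.clamp m n))
        ((bubble m φ).symm (Fin.clamp (m + 1) n))
    · rw [adjSwap_of_symmGen h]
    · rw [adjSwap_of_not_symmGen h, symm_trans_apply, symm_swap,
        swap_apply_of_ne_of_ne] <;> simp only [ne_eq, Fin.ext_iff, Fin.coe_clamp] <;> omega

noncomputable def active (φ : α ≃ Fin (n + 1)) (m : ℕ) : α :=
  (bubble m φ).symm (Fin.clamp m n)

noncomputable def promotionChain (φ : α ≃ Fin (n + 1)) (m : ℕ) : Finset α :=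
  (range (m + 1)).image (active φ)

theorem bubble_succ_of_symmGen {φ : α ≃ Fin (n + 1)} {m : ℕ} (hm : m < n)
    (h : SymmGen (· ≤ ·) (active φ m) (φ.symm (Fin.clamp (m + 1) n))) :
    bubble (m + 1) φ = bubble m φ := by
  rw [bubble_succ_apply, adjSwap_of_symmGen]
  rwa [bubble_symm_clamp_of_lt φ (Nat.lt_succ_self m) hm]

theorem active_succ_of_symmGen {φ : α ≃ Fin (n + 1)} {m : ℕ} (hm : m < n)
    (h : SymmGen (· ≤ ·) (active φ m) (φ.symm (Fin.clamp (m + 1) n))) :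
    active φ (m + 1) = φ.symm (Fin.clamp (m + 1) n) := by
  rw [active, bubble_succ_of_symmGen hm h, bubble_symm_clamp_of_lt φ (Nat.lt_succ_self m) hm]

theorem bubble_succ_of_not_symmGen {φ : α ≃ Fin (n + 1)} {m : ℕ} (hm : m < n)
    (h : ¬SymmGen (· ≤ ·) (active φ m) (φ.symm (Fin.clamp (m + 1) n))) :
    bubble (m + 1) φ = (bubble m φ).trans (swap (Fin.clamp m n) (Fin.clamp (m + 1) n)) := by
  rw [bubble_succ_apply, adjSwap_of_not_symmGen]
  rwa [bubble_symm_clamp_of_lt φ (Nat.lt_succ_self m) hm]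

theorem active_succ_of_not_symmGen {φ : α ≃ Fin (n + 1)} {m : ℕ} (hm : m < n)
    (h : ¬SymmGen (· ≤ ·) (active φ m) (φ.symm (Fin.clamp (m + 1) n))) :
    active φ (m + 1) = active φ m := by
  rw [active, bubble_succ_of_not_symmGen hm h, symm_trans_apply, symm_swap, swap_apply_right]
  rfl

theorem active_succ_of_le {φ : α ≃ Fin (n + 1)} {m : ℕ} (hm : n ≤ m) :
    active φ (m + 1) = active φ m := by
  have hclamp : Fin.clamp (m + 1) n = Fin.clamp m n := by ext; simp only [Fin.coe_clamp]; omega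
  rw [active, bubble_succ_apply, hclamp, adjSwap_of_symmGen (hclamp ▸ .rfl), active]

theorem apply_active_le (φ : α ≃ Fin (n + 1)) (m : ℕ) : (φ (active φ m) : ℕ) ≤ m := by
  induction m with
  | zero => simp [active, bubble]
  | succ m ih =>
    by_cases hm : m < n
    · by_cases h : SymmGen (· ≤ ·) (active φ m) (φ.symm (Fin.clamp (m + 1) n))
      · simp [active_succ_of_symmGen hm h]
      · rw [active_succ_of_not_symmGen hm h]; omega
    · have := (φ (active φ (m + 1))).isLt; omega

theorem active_lt_of_symmGen {φ : α ≃ Fin (n + 1)} (hφ : Monotone φ) {m : ℕ} (hm : m < n)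
    (h : SymmGen (· ≤ ·) (active φ m) (φ.symm (Fin.clamp (m + 1) n))) :
    active φ m < φ.symm (Fin.clamp (m + 1) n) := by
  have hpos := apply_active_le φ m
  rcases h with h | h
  · refine h.lt_of_ne fun he => ?_
    rw [he] at hpos; simp only [apply_symm_apply, Fin.coe_clamp] at hpos; omega
  · have := Fin.le_def.mp (hφ h); simp only [apply_symm_apply, Fin.coe_clamp] at this; omega

theorem monotone_active {φ : α ≃ Fin (n + 1)} (hφ : Monotone φ) : Monotone (active φ) := by
  refine monotone_nat_of_le_succ fun m => ?_
  by_cases hm : m < n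
  · by_cases h : SymmGen (· ≤ ·) (active φ m) (φ.symm (Fin.clamp (m + 1) n))
    · rw [active_succ_of_symmGen hm h]; exact (active_lt_of_symmGen hφ hm h).le
    · rw [active_succ_of_not_symmGen hm h]
  · rw [active_succ_of_le (not_lt.mp hm)]

theorem isMaxChain_promotionChain {φ : α ≃ Fin (n + 1)} (hφ : Monotone φ) :
    IsMaxChain (· ≤ ·) (promotionChain φ n : Set α) := by
  have hsub : (promotionChain φ n : Set α) ⊆ Set.range (active φ) := by
    simp [promotionChain]
  refine ⟨(monotone_active hφ).isChain_range.mono hsub, fun t ht hCt => hCt.antisymm ?_⟩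
  intro u hu
  have hmem : ∀ m ≤ n, active φ m ∈ promotionChain φ n := fun m hm =>
    mem_image_of_mem _ (mem_range.mpr (Nat.lt_succ_of_le hm))
  obtain ⟨j, hjn, rfl⟩ : ∃ j ≤ n, φ.symm (Fin.clamp j n) = u :=
    ⟨φ u, Nat.lt_succ_iff.mp (φ u).isLt, by
      rw [symm_apply_eq]; ext; simp only [Fin.coe_clamp]; omega⟩
  cases j with
  | zero => exact hmem 0 hjn
  | succ m =>
    rw [← active_succ_of_symmGen hjn (ht.total (hCt (hmem m (by omega))) hu)]
    exact hmem _ hjn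

theorem sign_bubble (b φ : α ≃ Fin (n + 1)) {m : ℕ} (hm : m ≤ n) :
    (Perm.sign (b.symm.trans (bubble m φ)) : ℤ) =
      Perm.sign (b.symm.trans φ) * (-1) ^ (m + 1 + #(promotionChain φ m)) := by
  induction m with
  | zero => simp [promotionChain, bubble]
  | succ m ih =>
    have hm' : m < n := by omega
    have hchain : promotionChain φ (m + 1) = insert (active φ (m + 1)) (promotionChain φ m) := by
      rw [promotionChain, range_add_one, image_insert]; rfl
    by_cases h : SymmGen (· ≤ ·) (active φ m) (φ.symm (Fin.clamp (m + 1) n))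
    · have hnew : active φ (m + 1) ∉ promotionChain φ m := by
        simp only [promotionChain, mem_image, mem_range, not_exists, not_and]
        intro j hj he
        have := apply_active_le φ j
        rw [he, active_succ_of_symmGen hm' h] at this
        simp only [apply_symm_apply, Fin.coe_clamp] at this
        omega
      rw [bubble_succ_of_symmGen hm' h, hchain, card_insert_of_notMem hnew, ih hm'.le]
      ring
    · have hold : active φ (m + 1) ∈ promotionChain φ m := by
        rw [active_succ_of_not_symmGen hm' h]
        exact mem_image_of_mem _ (self_mem_range_succ m)
      have hne : Fin.clamp m n ≠ Fin.clamp (m + 1) n := by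
        simp only [ne_eq, Fin.ext_iff, Fin.coe_clamp]; omega
      rw [bubble_succ_of_not_symmGen hm' h, hchain, insert_eq_of_mem hold, ← trans_assoc,
        Perm.sign_trans, Perm.sign_swap hne, Units.val_mul, ih hm'.le]
      push_cast
      ring

theorem sign_bubble_last_of_odd {φ : α ≃ Fin (n + 1)} (b : α ≃ Fin (n + 1))
    (hodd : Odd (n + 1 + #(promotionChain φ n))) :
    (Perm.sign (b.symm.trans (bubble n φ)) : ℤ) = -Perm.sign (b.symm.trans φ) := by
  rw [sign_bubble b φ le_rfl, hodd.neg_one_pow, mul_neg_one]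

end Promotion

open Promotion

noncomputable def signImbalance {α : Type*} [PartialOrder α] [Fintype α] {N : ℕ}
    (b : α ≃ Fin N) : ℤ :=
  ∑ φ : α ≃ Fin N, if Monotone φ then (Perm.sign (b.symm.trans φ) : ℤ) else 0

theorem signImbalance_eq_zero_of_forall_isMaxChain_odd {α : Type*} [PartialOrder α] [Fintype α]
    {N : ℕ} (b : α ≃ Fin N)
    (h : ∀ s : Finset α, IsMaxChain (· ≤ ·) (s : Set α) → Odd (N + #s)) :
    signImbalance b = 0 := by
  cases N with
  | zero =>
    have : IsEmpty α := b.isEmpty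
    exact absurd (h ∅ ⟨by simp, fun t _ _ => by simp [Set.eq_empty_of_isEmpty t]⟩) (by simp)
  | succ n =>
    set f : (α ≃ Fin (n + 1)) → ℤ := fun φ =>
      if Monotone φ then (Perm.sign (b.symm.trans φ) : ℤ) else 0
    have hf : ∀ φ, f φ = -f (bubble n φ) := by
      intro φ
      by_cases hφ : Monotone φ
      · simp only [f, if_pos hφ, if_pos ((monotone_bubble_iff n).mpr hφ),
          sign_bubble_last_of_odd b (h _ (isMaxChain_promotionChain hφ)), neg_neg]
      · simp only [f, if_neg hφ, if_neg (mt (monotone_bubble_iff n).mp hφ), neg_zero]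
    exact self_eq_neg.mp ((Fintype.sum_bijective _ (bijective_bubble n) f (-f ·) hf).trans
      (sum_neg_distrib f))

/-- Stanley's lemma. Let `P` be a finite poset such that the cardinalities of
all maximal chains of `P` have the same parity, opposite to the parity of `card P`. Then `P` is
sign-balanced: relative to any reference bijection `b`, the number of even linearizations of
`P` equals the number of odd ones. -/
theorem signBalanced_of_maximalChain_parity (α : Type*) [Fintype α] [PartialOrder α]
    (hparity : ∃ k : ℕ,
      (∀ s : Finset α, IsChain (· ≤ ·) (↑s : Set α) →
          (∀ t : Finset α, IsChain (· ≤ ·) (↑t : Set α) → s ⊆ t → s = t) →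
          s.card % 2 = k) ∧
      k ≠ Fintype.card α % 2) :
    ∀ b : α ≃ Fin (Fintype.card α),
      (∑ φ : α ≃ Fin (Fintype.card α),
        if Monotone ⇑φ then ((Equiv.Perm.sign (b.symm.trans φ)) : ℤ) else 0) = 0 := by
  obtain ⟨k, hk, hk_ne⟩ := hparity
  intro b
  refine signImbalance_eq_zero_of_forall_isMaxChain_odd b fun s hs => ?_
  have := hk s hs.isChain fun t ht hst => coe_inj.mp (hs.2 ht (coe_subset.mpr hst))
  rw [Nat.odd_iff]
  omega
end

section
/- Let P₀ be a finite poset with elements x₁,…,x_{m₀}, and let P₁,…,P_{m₀} be finite posets with pairwise disjoint underlying sets, where card(Pᵢ) = mᵢ. Let C₁,…,C_{m₀} be pairwise disjoint chains with card(Cᵢ) = mᵢ. Then the number of linearizations of the lexicographic sum satisfies L₊(P₀*(P₁,…,P_{m₀})) = (∏_{1≤i≤m₀} L₊(Pᵢ)) · L₊(P₀*(C₁,…,C_{m₀})). -/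
open scoped Classical

/-- Underlying set of the lexicographic sum over `Fin m₀` of chains `C i` of `m i` elements. -/
abbrev LexSumChains (m₀ : ℕ) (m : Fin m₀ → ℕ) : Type := Σ i : Fin m₀, Fin (m i)

/-- The order of the lexicographic sum `P₀ * (C₁, …, C_{m₀})` of chains over the poset
`(Fin m₀, r0)`: within a chain elements keep their order, and an element of `C i` is below an
element of `C i'` (for `i ≠ i'`) iff `xᵢ ≺₀ x_{i'}`. -/
def lexRel {m₀ : ℕ} (r0 : Fin m₀ → Fin m₀ → Prop) (m : Fin m₀ → ℕ)
    (x y : LexSumChains m₀ m) : Prop :=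
  (x.1 = y.1 ∧ (x.2 : ℕ) ≤ (y.2 : ℕ)) ∨ (x.1 ≠ y.1 ∧ r0 x.1 y.1)

/-- `φ` is (the isotone bijection corresponding to) a linearization of the lexicographic sum. -/
def IsLin {m₀ : ℕ} (r0 : Fin m₀ → Fin m₀ → Prop) (m : Fin m₀ → ℕ)
    (φ : LexSumChains m₀ m ≃ Fin (∑ i, m i)) : Prop :=
  ∀ x y, lexRel r0 m x y → φ x ≤ φ y

/-- `b` is the reference ordering, listing the elements `x_{i,j}` in lexicographic order
of the pairs `(i,j)`. -/
def IsRef {m₀ : ℕ} (m : Fin m₀ → ℕ) (b : LexSumChains m₀ m ≃ Fin (∑ i, m i)) : Prop :=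
  ∀ x y : LexSumChains m₀ m,
    (x.1 < y.1 ∨ (x.1 = y.1 ∧ (x.2 : ℕ) ≤ (y.2 : ℕ))) → b x ≤ b y

/-- `L₊(P₀; m₁, …, m_{m₀})`, the number of linearizations of the lexicographic sum of chains. -/
noncomputable def Lplus (m₀ : ℕ) (r0 : Fin m₀ → Fin m₀ → Prop) (m : Fin m₀ → ℕ) : ℕ :=
  Nat.card {φ : LexSumChains m₀ m ≃ Fin (∑ i, m i) // IsLin r0 m φ}

/-- `L₋(P₀; m₁, …, m_{m₀})`, the sign-imbalance (number of even minus number of odd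
linearizations) relative to the reference ordering `b`. -/
noncomputable def Lminus (m₀ : ℕ) (r0 : Fin m₀ → Fin m₀ → Prop) (m : Fin m₀ → ℕ)
    (b : LexSumChains m₀ m ≃ Fin (∑ i, m i)) : ℤ :=
  ∑ φ : LexSumChains m₀ m ≃ Fin (∑ i, m i),
    if IsLin r0 m φ then ((Equiv.Perm.sign (b.symm.trans φ)) : ℤ) else 0

/-- The underlying set of the lexicographic sum `P₀ * (P₁, …, P_{m₀})` of the posets `β i`
over the poset `(Fin m₀, r0)`. -/
abbrev LexSum (m₀ : ℕ) (β : Fin m₀ → Type) : Type := Σ i : Fin m₀, β i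

/-- The order of the lexicographic sum: two elements of the same `β i` are ordered as in `β i`,
and an element of `β i` is below an element of `β i'` (for `i ≠ i'`) iff `xᵢ ≺₀ x_{i'}`. -/
def lexRelGen {m₀ : ℕ} (r0 : Fin m₀ → Fin m₀ → Prop) (β : Fin m₀ → Type)
    [∀ i, PartialOrder (β i)] (x y : LexSum m₀ β) : Prop :=
  (∃ h : x.1 = y.1, cast (congrArg β h) x.2 ≤ y.2) ∨ (x.1 ≠ y.1 ∧ r0 x.1 y.1)

/-- `φ` is (the isotone bijection corresponding to) a linearization of the lexicographic sum. -/
def IsLinGen {m₀ : ℕ} (r0 : Fin m₀ → Fin m₀ → Prop) (β : Fin m₀ → Type)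
    [∀ i, PartialOrder (β i)] [∀ i, Fintype (β i)]
    (φ : LexSum m₀ β ≃ Fin (∑ i, Fintype.card (β i))) : Prop :=
  ∀ x y, lexRelGen r0 β x y → φ x ≤ φ y


section AuxForStatement4

/-- Blockwise strict monotonicity of a linearization of a lexicographic sum of chains. -/
lemma isLin_strictMono {m₀ : ℕ} {r0 : Fin m₀ → Fin m₀ → Prop} {m : Fin m₀ → ℕ}
    {χ : LexSumChains m₀ m ≃ Fin (∑ i, m i)}
    (hχ : IsLin r0 m χ) (i : Fin m₀) : StrictMono fun j : Fin (m i) => χ ⟨i, j⟩ := by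
  intro j j' hjj'
  refine lt_of_le_of_ne (hχ _ _ (Or.inl ⟨rfl, hjj'.le⟩)) ?_
  intro h
  have h2 : (⟨i, j⟩ : LexSumChains m₀ m) = ⟨i, j'⟩ := χ.injective h
  exact hjj'.ne (eq_of_heq (Sigma.mk.inj_iff.mp h2).2)

/-- The forward map: a family of monotone bijections together with a linearization of the
lexicographic sum of chains yields a linearization of the general lexicographic sum. -/
def lexF {m₀ : ℕ} (r0 : Fin m₀ → Fin m₀ → Prop) (β : Fin m₀ → Type)
    [∀ i, PartialOrder (β i)] [∀ i, Fintype (β i)]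
    (p : (∀ i, {ψ : β i ≃ Fin (Fintype.card (β i)) // Monotone ⇑ψ}) ×
      {χ : LexSumChains m₀ (fun i => Fintype.card (β i)) ≃ Fin (∑ i, Fintype.card (β i)) //
        IsLin r0 (fun i => Fintype.card (β i)) χ}) :
    {φ : LexSum m₀ β ≃ Fin (∑ i, Fintype.card (β i)) // IsLinGen r0 β φ} :=
  ⟨(Equiv.sigmaCongrRight fun i => (p.1 i).1).trans p.2.1, by
    rintro ⟨i, a⟩ ⟨i', a'⟩ (⟨h, hle⟩ | ⟨hne, hr⟩)
    · dsimp only at h; subst h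
      rw [cast_eq] at hle
      exact p.2.2 _ _ (Or.inl ⟨rfl, (p.1 i).2 hle⟩)
    · exact p.2.2 _ _ (Or.inr ⟨hne, hr⟩)⟩

lemma lexF_injective {m₀ : ℕ} (r0 : Fin m₀ → Fin m₀ → Prop) (β : Fin m₀ → Type)
    [∀ i, PartialOrder (β i)] [∀ i, Fintype (β i)] :
    Function.Injective (lexF r0 β) := by
  rintro ⟨ψ, χ⟩ ⟨ψ', χ'⟩ h
  have h0 : (Equiv.sigmaCongrRight fun i => (ψ i).1).trans χ.1
      = (Equiv.sigmaCongrRight fun i => (ψ' i).1).trans χ'.1 := congrArg Subtype.val h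
  have hpt : ∀ i (b : β i), χ.1 ⟨i, (ψ i).1 b⟩ = χ'.1 ⟨i, (ψ' i).1 b⟩ := by
    intro i b
    have := Equiv.ext_iff.mp h0 ⟨i, b⟩
    simpa using this
  have hψ : ψ = ψ' := by
    funext i
    have hg : StrictMono fun j : Fin (Fintype.card (β i)) => χ.1 ⟨i, j⟩ :=
      isLin_strictMono χ.2 i
    have hg' : StrictMono fun j : Fin (Fintype.card (β i)) => χ'.1 ⟨i, j⟩ :=
      isLin_strictMono χ'.2 i
    set σ : Fin (Fintype.card (β i)) ≃ Fin (Fintype.card (β i)) :=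
      (ψ i).1.symm.trans (ψ' i).1 with hσ
    have hcomp : ∀ j, χ.1 ⟨i, j⟩ = χ'.1 ⟨i, σ j⟩ := by
      intro j
      have := hpt i ((ψ i).1.symm j)
      simpa [hσ] using this
    have hrange : (Set.range fun j : Fin (Fintype.card (β i)) => χ.1 ⟨i, j⟩)
        = Set.range fun j : Fin (Fintype.card (β i)) => χ'.1 ⟨i, j⟩ := by
      ext z
      constructor
      · rintro ⟨j, rfl⟩
        exact ⟨σ j, (hcomp j).symm⟩
      · rintro ⟨j, rfl⟩
        refine ⟨σ.symm j, ?_⟩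
        dsimp only
        rw [hcomp, σ.apply_symm_apply]
    have hwf : WellFoundedLT (Fin (Fintype.card (β i))) := inferInstance
    have heq : (fun j : Fin (Fintype.card (β i)) => χ.1 ⟨i, j⟩)
        = fun j => χ'.1 ⟨i, j⟩ := (StrictMono.range_inj hg hg').mp hrange
    have hσid : ∀ j, σ j = j := by
      intro j
      have h1 : χ'.1 ⟨i, σ j⟩ = χ'.1 ⟨i, j⟩ := by
        rw [← hcomp j]; exact congrFun heq j
      have := χ'.1.injective h1
      exact eq_of_heq (Sigma.mk.inj_iff.mp this).2
    apply Subtype.ext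
    apply Equiv.ext
    intro b
    have := hσid ((ψ i).1 b)
    simpa [hσ] using this.symm
  subst hψ
  have hχ : χ = χ' := by
    apply Subtype.ext
    apply Equiv.ext
    rintro ⟨i, j⟩
    have := hpt i ((ψ i).1.symm j)
    simpa using this
  rw [hχ]

lemma lexF_surjective {m₀ : ℕ} (r0 : Fin m₀ → Fin m₀ → Prop) (β : Fin m₀ → Type)
    [∀ i, PartialOrder (β i)] [∀ i, Fintype (β i)] :
    Function.Surjective (lexF r0 β) := by
  rintro ⟨φ, hφ⟩
  -- blockwise rank maps
  have hf_inj : ∀ i, Function.Injective (fun b : β i => φ ⟨i, b⟩) := by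
    intro i b b' h
    have h2 : (⟨i, b⟩ : LexSum m₀ β) = ⟨i, b'⟩ := φ.injective h
    exact eq_of_heq (Sigma.mk.inj_iff.mp h2).2
  have hf_mono : ∀ i, Monotone (fun b : β i => φ ⟨i, b⟩) := by
    intro i b b' h
    exact hφ _ _ (Or.inl ⟨rfl, by rw [cast_eq]; exact h⟩)
  -- the image finsets
  set s : ∀ i, Finset (Fin (∑ i, Fintype.card (β i))) :=
    fun i => Finset.univ.image (fun b : β i => φ ⟨i, b⟩) with hs
  have hcard : ∀ i, (s i).card = Fintype.card (β i) := by
    intro i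
    rw [hs]
    rw [Finset.card_image_of_injective _ (hf_inj i), Finset.card_univ]
  set oi : ∀ i, Fin (Fintype.card (β i)) ≃o (s i) :=
    fun i => (s i).orderIsoOfFin (hcard i) with hoi
  have hmem : ∀ i (b : β i), φ ⟨i, b⟩ ∈ s i := by
    intro i b
    rw [hs]
    exact Finset.mem_image_of_mem _ (Finset.mem_univ b)
  set ψf : ∀ i, β i → Fin (Fintype.card (β i)) :=
    fun i b => (oi i).symm ⟨φ ⟨i, b⟩, hmem i b⟩ with hψf
  have hψf_inj : ∀ i, Function.Injective (ψf i) := by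
    intro i b b' h
    rw [hψf] at h
    have := (oi i).symm.injective h
    exact hf_inj i (congrArg Subtype.val this)
  have hψf_bij : ∀ i, Function.Bijective (ψf i) := by
    intro i
    rw [Fintype.bijective_iff_injective_and_card]
    exact ⟨hψf_inj i, by simp⟩
  set ψ : ∀ i, β i ≃ Fin (Fintype.card (β i)) :=
    fun i => Equiv.ofBijective (ψf i) (hψf_bij i) with hψ
  have hψ_apply : ∀ i (b : β i), ψ i b = ψf i b := fun i b => rfl
  have hval : ∀ i (b : β i), ((oi i) (ψ i b) : Fin (∑ i, Fintype.card (β i))) = φ ⟨i, b⟩ := by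
    intro i b
    rw [hψ_apply, hψf, OrderIso.apply_symm_apply]
  have hψ_mono : ∀ i, Monotone ⇑(ψ i) := by
    intro i b b' hb
    have h1 : (⟨φ ⟨i, b⟩, hmem i b⟩ : (s i : Finset _)) ≤ ⟨φ ⟨i, b'⟩, hmem i b'⟩ :=
      Subtype.mk_le_mk.mpr (hf_mono i hb)
    exact (oi i).symm.monotone h1
  -- the chain linearization
  set χ : LexSumChains m₀ (fun i => Fintype.card (β i)) ≃ Fin (∑ i, Fintype.card (β i)) :=
    (Equiv.sigmaCongrRight fun i => ψ i).symm.trans φ with hχdef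
  have hχ_apply : ∀ i (j : Fin (Fintype.card (β i))), χ ⟨i, j⟩ = φ ⟨i, (ψ i).symm j⟩ := by
    intro i j
    rw [hχdef]
    rfl
  have hχ_val : ∀ i (j : Fin (Fintype.card (β i))),
      χ ⟨i, j⟩ = ((oi i) j : Fin (∑ i, Fintype.card (β i))) := by
    intro i j
    rw [hχ_apply, ← hval i ((ψ i).symm j), Equiv.apply_symm_apply]
  have hχ_lin : IsLin r0 (fun i => Fintype.card (β i)) χ := by
    rintro ⟨i, j⟩ ⟨i', j'⟩ (⟨h, hle⟩ | ⟨hne, hr⟩)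
    · dsimp only at h; subst h
      rw [hχ_val, hχ_val]
      exact (oi i).monotone (by exact_mod_cast hle)
    · rw [hχ_apply, hχ_apply]
      exact hφ _ _ (Or.inr ⟨hne, hr⟩)
  refine ⟨⟨fun i => ⟨ψ i, hψ_mono i⟩, ⟨χ, hχ_lin⟩⟩, ?_⟩
  apply Subtype.ext
  apply Equiv.ext
  intro x
  show χ ((Equiv.sigmaCongrRight fun i => ψ i) x) = φ x
  rw [hχdef, Equiv.trans_apply, Equiv.symm_apply_apply]

end AuxForStatement4

/-- The number of linearizations of a lexicographic sum
`P₀ * (P₁, …, P_{m₀})` is the product, over `i`, of the numbers of linearizations of the `Pᵢ`,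
times the number of linearizations of the lexicographic sum over `P₀` of chains `Cᵢ` with
`card Cᵢ = card Pᵢ`. -/
theorem lexSum_linearizationCount_eq_prod_mul (m₀ : ℕ)
    (r0 : Fin m₀ → Fin m₀ → Prop) (hr0 : IsPartialOrder (Fin m₀) r0)
    (β : Fin m₀ → Type) [∀ i, PartialOrder (β i)] [∀ i, Fintype (β i)] :
    Nat.card {φ : LexSum m₀ β ≃ Fin (∑ i, Fintype.card (β i)) // IsLinGen r0 β φ} =
      (∏ i : Fin m₀,
          Nat.card {ψ : β i ≃ Fin (Fintype.card (β i)) // Monotone ⇑ψ}) *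
        Lplus m₀ r0 (fun i => Fintype.card (β i)) := by
  rw [Lplus, ← Nat.card_pi, ← Nat.card_prod]
  exact (Nat.card_congr (Equiv.ofBijective (lexF r0 β)
    ⟨lexF_injective r0 β, lexF_surjective r0 β⟩)).symm
end

section
/- Let P₀ be a finite poset with elements x₁,…,x_{m₀}, and for each i let Pᵢ be a finite poset with underlying set {x_{i,1},…,x_{i,mᵢ}}, these sets pairwise disjoint; give each Pᵢ the reference ordering x_{i,1} < … < x_{i,mᵢ}, and give the lexicographic sum P₀*(P₁,…,P_{m₀}) the reference ordering listing all x_{i,j} in lexicographic order of (i,j). Let P_{i,ch} be the chain x_{i,1} < … < x_{i,mᵢ} on |Pᵢ|. Then the sign-imbalances satisfy L₋(P₀*(P₁,…,P_{m₀})) = (∏_{1≤i≤m₀} L₋(Pᵢ)) · L₋(P₀*(P_{1,ch},…,P_{m₀,ch})), all sign-imbalances taken relative to the indicated reference orderings. -/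
open scoped Classical

/-- `B` is the reference ordering on the lexicographic sum `P₀ * (P₁, …, P_{m₀})`: it lists the
elements `x_{i,j}` (where `j` is the index given by the reference bijection `bfam i` of `Pᵢ`)
in lexicographic order of the pairs `(i,j)`. -/
def IsRefGen {m₀ : ℕ} (β : Fin m₀ → Type) [∀ i, Fintype (β i)]
    (bfam : ∀ i, β i ≃ Fin (Fintype.card (β i)))
    (B : LexSum m₀ β ≃ Fin (∑ i, Fintype.card (β i))) : Prop :=
  ∀ x y : LexSum m₀ β,
    (x.1 < y.1 ∨ (x.1 = y.1 ∧ ((bfam x.1 x.2 : ℕ) ≤ (bfam y.1 y.2 : ℕ)))) → B x ≤ B y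

/-!
A linearization `φ` of `P₀ * (P₁, …, P_{m₀})` restricts on each block `Pᵢ` to an injective map
into `{1, …, n}`; ranking its values gives a linearization `ψᵢ` of `Pᵢ`, and `φ` factors uniquely
as `χ ∘ (Σᵢ ψᵢ)` with `χ` a linearization of the lexicographic sum of chains. Conversely every
such composite is a linearization, so linearizations of `P₀ * (P₁, …, P_{m₀})` are in bijection
with tuples `(ψ₁, …, ψ_{m₀}, χ)`. The reference ordering of `P₀ * (P₁, …, P_{m₀})` is likewise
`b_ch ∘ (Σᵢ bᵢ)`, so the sign of `φ` relative to it is `∏ᵢ sign(ψᵢ bᵢ⁻¹) · sign(χ b_ch⁻¹)`, because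
the sign of a permutation acting blockwise on a sigma type is the product of the blockwise signs.
Summing over the bijection yields the product formula.
-/

theorem Fintype.sum_ite_eq_sum_subtype {α M : Type*} [Fintype α] [AddCommMonoid M]
    (p : α → Prop) [DecidablePred p] (f : α → M) :
    (∑ x, if p x then f x else 0) = ∑ x : Subtype p, f x := by
  rw [← Finset.sum_filter]
  exact Finset.sum_subtype _ (fun _ => by simp) _

theorem Equiv.eq_of_strictMono_comp_symm {α γ : Type*} [LinearOrder γ] {n : ℕ} {f : α → γ}
    {e e' : α ≃ Fin n} (he : StrictMono (f ∘ e.symm)) (he' : StrictMono (f ∘ e'.symm)) :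
    e = e' := by
  have hfun : f ∘ e.symm = f ∘ e'.symm :=
    (he.range_inj he').1 <| by rw [EquivLike.range_comp, EquivLike.range_comp]
  refine Equiv.symm_bijective.injective <| Equiv.ext fun j => ?_
  have : j = e (e'.symm j) := he.injective <| by simpa using congrFun hfun j
  simpa using congrArg e.symm this

theorem Equiv.strictMono_comp_symm_of_le_imp_le {α γ δ : Type*} [LinearOrder γ] [Preorder δ]
    {k : α → γ} {e : α ≃ δ} (h : ∀ x y, k x ≤ k y → e x ≤ e y) : StrictMono (k ∘ e.symm) :=
  fun a b hab => not_le.1 fun hba => hab.not_ge <| by simpa using h _ _ hba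

theorem exists_equiv_fin_strictMono_comp_symm {α γ : Type*} [Fintype α] [LinearOrder γ]
    {f : α → γ} (hf : Function.Injective f) :
    ∃ e : α ≃ Fin (Fintype.card α), StrictMono (f ∘ e.symm) := by
  set e₀ := Fintype.equivFin α
  refine ⟨e₀.trans (Tuple.sort (f ∘ e₀.symm)).symm, ?_⟩
  exact (Tuple.monotone_sort (f ∘ e₀.symm)).strictMono_of_injective
    (hf.comp (e₀.symm.injective.comp (Equiv.injective _)))

namespace Equiv.Perm

variable {ι : Type*} [Fintype ι] [DecidableEq ι] {κ : ι → Type*} [∀ i, Fintype (κ i)]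
  [∀ i, DecidableEq (κ i)]

theorem sign_sigmaCongrRight_mulSingle (i : ι) (τ : Perm (κ i)) :
    sign (sigmaCongrRight (Pi.mulSingle i τ)) = sign τ := by
  rw [← sign_extendDomain τ (sigmaSubtype i).symm]
  congr 1
  ext ⟨k, a⟩ : 1
  by_cases h : k = i
  · subst h
    simp only [Pi.mulSingle_eq_same, sigmaCongrRight_apply, extendDomain_apply_subtype]
    rfl
  · simp [extendDomain_apply_not_subtype, h]

theorem sign_sigmaCongrRight (σ : ∀ i, Perm (κ i)) :
    sign (sigmaCongrRight σ) = ∏ i, sign (σ i) := by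
  let F : (∀ i, Perm (κ i)) →* ℤˣ := sign.comp (sigmaCongrRightHom κ)
  let G : (∀ i, Perm (κ i)) →* ℤˣ := ∏ i, sign.comp (Pi.evalMonoidHom _ i)
  have hFG : F = G := MonoidHom.pi_ext fun i τ => by
    simp only [F, G, MonoidHom.comp_apply, MonoidHom.finsetProd_apply, Pi.evalMonoidHom_apply]
    rw [Fintype.prod_eq_single i fun j hj => by simp [hj], Pi.mulSingle_eq_same]
    exact sign_sigmaCongrRight_mulSingle i τ
  simpa [F, G] using DFunLike.congr_fun hFG σ

theorem sign_symm_trans_sigmaCongrRight_trans {α : ι → Type*} {γ : Type*} [Fintype γ]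
    [DecidableEq γ] (e ψ : ∀ i, α i ≃ κ i) (b χ : (Σ i, κ i) ≃ γ) :
    sign (((Equiv.sigmaCongrRight e).trans b).symm.trans ((Equiv.sigmaCongrRight ψ).trans χ)) =
      (∏ i, sign ((e i).symm.trans (ψ i))) * sign (b.symm.trans χ) := by
  have : ((Equiv.sigmaCongrRight e).trans b).symm.trans ((Equiv.sigmaCongrRight ψ).trans χ) =
      b.symm.trans ((sigmaCongrRight fun i => (e i).symm.trans (ψ i)).trans χ) := by
    ext; rfl
  rw [this, sign_trans_trans, sign_sigmaCongrRight]

end Equiv.Perm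

section LexSum

variable {m₀ : ℕ} {r0 : Fin m₀ → Fin m₀ → Prop}

theorem IsLin.strictMono_fiber {m : Fin m₀ → ℕ} {χ : LexSumChains m₀ m ≃ Fin (∑ i, m i)}
    (hχ : IsLin r0 m χ) (i : Fin m₀) : StrictMono fun j : Fin (m i) => χ ⟨i, j⟩ :=
  Monotone.strictMono_of_injective (fun _ _ hj => hχ _ _ (Or.inl ⟨rfl, hj⟩))
    fun _ _ h => by simpa using χ.injective h

variable {β : Fin m₀ → Type} [∀ i, Fintype (β i)]

theorem sigmaCongrRight_trans_inj {ψ ψ' : ∀ i, β i ≃ Fin (Fintype.card (β i))}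
    {χ χ' : LexSumChains m₀ (fun i => Fintype.card (β i)) ≃ Fin (∑ i, Fintype.card (β i))}
    (hχ : IsLin r0 _ χ) (hχ' : IsLin r0 _ χ')
    (h : (Equiv.sigmaCongrRight ψ).trans χ = (Equiv.sigmaCongrRight ψ').trans χ') :
    ψ = ψ' ∧ χ = χ' := by
  obtain rfl : ψ = ψ' := funext fun i =>
    Equiv.eq_of_strictMono_comp_symm (f := fun x => ((Equiv.sigmaCongrRight ψ).trans χ) ⟨i, x⟩)
      (by simpa [Function.comp_def] using hχ.strictMono_fiber i)
      (by simpa [h, Function.comp_def] using hχ'.strictMono_fiber i)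
  exact ⟨rfl, Equiv.ext fun z => by
    simpa using Equiv.congr_fun h ((Equiv.sigmaCongrRight ψ).symm z)⟩

theorem IsRefGen.eq_sigmaCongrRight_trans {bfam : ∀ i, β i ≃ Fin (Fintype.card (β i))}
    {B : LexSum m₀ β ≃ Fin (∑ i, Fintype.card (β i))}
    {bc : LexSumChains m₀ (fun i => Fintype.card (β i)) ≃ Fin (∑ i, Fintype.card (β i))}
    (hB : IsRefGen β bfam B) (hbc : IsRef _ bc) : B = (Equiv.sigmaCongrRight bfam).trans bc := by
  let key : LexSumChains m₀ (fun i => Fintype.card (β i)) → Fin m₀ ×ₗ ℕ :=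
    fun x => toLex (x.1, x.2)
  have hkey : ∀ x y, key x ≤ key y → x.1 < y.1 ∨ (x.1 = y.1 ∧ (x.2 : ℕ) ≤ y.2) :=
    fun _ _ => Prod.Lex.toLex_le_toLex.1
  refine Equiv.eq_of_strictMono_comp_symm (f := key ∘ Equiv.sigmaCongrRight bfam)
    (Equiv.strictMono_comp_symm_of_le_imp_le fun x y hxy => hB x y (hkey _ _ hxy)) ?_
  show StrictMono fun x => key (Equiv.sigmaCongrRight bfam
    (((Equiv.sigmaCongrRight bfam).trans bc).symm x))
  simp only [Equiv.symm_trans_apply, Equiv.apply_symm_apply]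
  exact Equiv.strictMono_comp_symm_of_le_imp_le fun x y hxy => hbc x y (hkey _ _ hxy)

variable [∀ i, PartialOrder (β i)]

theorem isLinGen_sigmaCongrRight_trans {ψ : ∀ i, β i ≃ Fin (Fintype.card (β i))}
    {χ : LexSumChains m₀ (fun i => Fintype.card (β i)) ≃ Fin (∑ i, Fintype.card (β i))}
    (hψ : ∀ i, Monotone (ψ i)) (hχ : IsLin r0 _ χ) :
    IsLinGen r0 β ((Equiv.sigmaCongrRight ψ).trans χ) := by
  rintro ⟨i, a⟩ ⟨i', b⟩ (⟨hii', hab⟩ | ⟨hne, hr⟩)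
  · obtain rfl : i = i' := hii'
    exact hχ _ _ (Or.inl ⟨rfl, hψ i hab⟩)
  · exact hχ _ _ (Or.inr ⟨hne, hr⟩)

theorem IsLinGen.exists_sigmaCongrRight_trans {φ : LexSum m₀ β ≃ Fin (∑ i, Fintype.card (β i))}
    (hφ : IsLinGen r0 β φ) :
    ∃ ψ : ∀ i, β i ≃ Fin (Fintype.card (β i)), ∃ χ, (∀ i, Monotone (ψ i)) ∧
      IsLin r0 (fun i => Fintype.card (β i)) χ ∧ (Equiv.sigmaCongrRight ψ).trans χ = φ := by
  have hfib : ∀ i, Function.Injective fun x : β i => φ ⟨i, x⟩ := fun i x y h => by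
    simpa using φ.injective h
  choose ψ hψ using fun i => exists_equiv_fin_strictMono_comp_symm (hfib i)
  refine ⟨ψ, (Equiv.sigmaCongrRight ψ).symm.trans φ, fun i x y hxy => ?_, ?_,
    (Equiv.trans_cancel_left _ _ _).2 rfl⟩
  · have := hφ ⟨i, x⟩ ⟨i, y⟩ (Or.inl ⟨rfl, hxy⟩)
    exact (hψ i).le_iff_le.1 (by simpa using this)
  · rintro ⟨i, j⟩ ⟨i', j'⟩ (⟨rfl, hjj⟩ | ⟨hne, hr⟩)
    · exact (hψ i).monotone hjj
    · exact hφ _ _ (Or.inr ⟨hne, hr⟩)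

theorem bijective_sigmaCongrRight_trans :
    Function.Bijective fun p : (∀ i, {ψ : β i ≃ Fin (Fintype.card (β i)) // Monotone ψ}) ×
        {χ // IsLin r0 (fun i => Fintype.card (β i)) χ} =>
      (⟨(Equiv.sigmaCongrRight fun i => (p.1 i).1).trans p.2.1,
        isLinGen_sigmaCongrRight_trans (fun i => (p.1 i).2) p.2.2⟩ : {φ // IsLinGen r0 β φ}) := by
  refine ⟨fun ⟨ψ, χ⟩ ⟨ψ', χ'⟩ h => ?_, fun ⟨φ, hφ⟩ => ?_⟩
  · obtain ⟨hψ, hχ⟩ := sigmaCongrRight_trans_inj χ.2 χ'.2 (congrArg Subtype.val h)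
    exact Prod.ext (funext fun i => Subtype.ext (congrFun hψ i)) (Subtype.ext hχ)
  · obtain ⟨ψ, χ, hψ, hχ, rfl⟩ := hφ.exists_sigmaCongrRight_trans
    exact ⟨(fun i => ⟨ψ i, hψ i⟩, ⟨χ, hχ⟩), rfl⟩

end LexSum

theorem lexSum_signImbalance_eq_prod_mul_general (m₀ : ℕ)
    (r0 : Fin m₀ → Fin m₀ → Prop)
    (β : Fin m₀ → Type) [∀ i, PartialOrder (β i)] [∀ i, Fintype (β i)]
    (bfam : ∀ i, β i ≃ Fin (Fintype.card (β i)))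
    (B : LexSum m₀ β ≃ Fin (∑ i, Fintype.card (β i))) (hB : IsRefGen β bfam B)
    (bc : LexSumChains m₀ (fun i => Fintype.card (β i)) ≃ Fin (∑ i, Fintype.card (β i)))
    (hbc : IsRef (fun i => Fintype.card (β i)) bc) :
    (∑ φ : LexSum m₀ β ≃ Fin (∑ i, Fintype.card (β i)),
        if IsLinGen r0 β φ then ((Equiv.Perm.sign (B.symm.trans φ)) : ℤ) else 0) =
      (∏ i : Fin m₀,
          ∑ ψ : β i ≃ Fin (Fintype.card (β i)),
            if Monotone ⇑ψ then ((Equiv.Perm.sign ((bfam i).symm.trans ψ)) : ℤ) else 0) *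
        Lminus m₀ r0 (fun i => Fintype.card (β i)) bc := by
  obtain rfl := hB.eq_sigmaCongrRight_trans hbc
  simp only [Lminus, Fintype.sum_ite_eq_sum_subtype]
  rw [← (Equiv.ofBijective _ (bijective_sigmaCongrRight_trans (r0 := r0))).sum_comp,
    Fintype.prod_sum, Fintype.sum_mul_sum, Fintype.sum_prod_type]
  simp only [Equiv.ofBijective_apply, Equiv.Perm.sign_symm_trans_sigmaCongrRight_trans]
  push_cast
  rfl

/-- The sign-imbalance of a lexicographic sum `P₀ * (P₁, …, P_{m₀})`, relative
to the indicated reference ordering, is the product over `i` of the sign-imbalances of the `Pᵢ`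
(relative to their reference orderings `bfam i`), times the sign-imbalance of the lexicographic
sum over `P₀` of the chains `P_{i,ch}` (relative to its reference ordering). -/
theorem lexSum_signImbalance_eq_prod_mul (m₀ : ℕ)
    (r0 : Fin m₀ → Fin m₀ → Prop) (hr0 : IsPartialOrder (Fin m₀) r0)
    (β : Fin m₀ → Type) [∀ i, PartialOrder (β i)] [∀ i, Fintype (β i)]
    (bfam : ∀ i, β i ≃ Fin (Fintype.card (β i)))
    (B : LexSum m₀ β ≃ Fin (∑ i, Fintype.card (β i))) (hB : IsRefGen β bfam B)
    (bc : LexSumChains m₀ (fun i => Fintype.card (β i)) ≃ Fin (∑ i, Fintype.card (β i)))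
    (hbc : IsRef (fun i => Fintype.card (β i)) bc) :
    (∑ φ : LexSum m₀ β ≃ Fin (∑ i, Fintype.card (β i)),
        if IsLinGen r0 β φ then ((Equiv.Perm.sign (B.symm.trans φ)) : ℤ) else 0) =
      (∏ i : Fin m₀,
          ∑ ψ : β i ≃ Fin (Fintype.card (β i)),
            if Monotone ⇑ψ then ((Equiv.Perm.sign ((bfam i).symm.trans ψ)) : ℤ) else 0) *
        Lminus m₀ r0 (fun i => Fintype.card (β i)) bc :=
  lexSum_signImbalance_eq_prod_mul_general m₀ r0 β bfam B hB bc hbc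
end

section
/- Let P₀ be a finite poset with elements x₁,…,x_{m₀}, fix an index i₀ ∈ {1,…,m₀} and nonnegative values mᵢ for each i ≠ i₀. Then the function m_{i₀} ↦ L₊(P₀; m₁,…,m_{m₀}) is given by a polynomial in m_{i₀}, whose degree equals the sum of the values mᵢ over those i ≠ i₀ such that xᵢ is incomparable with x_{i₀} in P₀. -/
open scoped Classical

/-!
A linearization of the lexicographic sum is determined by its word, whose `p`-th letter is the
chain containing the `p`-th element. These are exactly the words with `mᵢ` letters `i` in which
no letter is preceded by a letter strictly above it.

Deleting the `t` letters `i₀` from such a word leaves a word `d` of the same kind without `i₀`,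
and the letters `i₀` can be put back exactly at the positions after the last letter below `i₀`
and before the first letter above it. If `g d` letters lie in between, there are
`(g d + t).choose t` ways to do so. Hence `L₊ = ∑_d (g d + t).choose t`, a polynomial in `t` with
positive leading coefficients and degree `max_d g d`. The letters between the two barriers are
incomparable with `i₀`, so `g d` is at most their number, with equality for a word that lists the
letters below `i₀` first and those above `i₀` last.
-/

open Finset

lemma Fin.card_filter_le_and_lt {n a b : ℕ} (hbn : b ≤ n) :
    #{p : Fin n | a ≤ (p : ℕ) ∧ (p : ℕ) < b} = b - a := by
  have hsdiff : ({p | a ≤ (p : ℕ) ∧ (p : ℕ) < b} : Finset (Fin n)) =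
      ({p | (p : ℕ) < b} : Finset (Fin n)) \ ({p | (p : ℕ) < a} : Finset (Fin n)) := by
    ext p
    simp only [mem_filter, mem_univ, true_and, mem_sdiff, not_lt, and_comm]
  have hinter : ({p | (p : ℕ) < a} : Finset (Fin n)) ∩ ({p | (p : ℕ) < b} : Finset (Fin n)) =
      ({p | (p : ℕ) < min a b} : Finset (Fin n)) := by
    ext p
    simp only [mem_inter, mem_filter, mem_univ, true_and, lt_min_iff]
  rw [hsdiff, card_sdiff, hinter, Fin.card_filter_val_lt, Fin.card_filter_val_lt]
  omega

namespace Finset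

section OrderEmb

variable {β : Type*} [LinearOrder β]

lemma card_filter_lt_orderEmbOfFin (S : Finset β) {k : ℕ} (h : #S = k) (q : Fin k) :
    #{s ∈ S | s < S.orderEmbOfFin h q} = q := by
  have hmap :
      {s ∈ S | s < S.orderEmbOfFin h q} = (Iio q).map (S.orderEmbOfFin h).toEmbedding := by
    ext s
    simp only [mem_filter, mem_map, mem_Iio, RelEmbedding.coe_toEmbedding]
    constructor
    · rintro ⟨hs, hsq⟩
      obtain ⟨a, rfl⟩ : s ∈ Set.range (S.orderEmbOfFin h) := by
        rwa [range_orderEmbOfFin]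
      exact ⟨a, (S.orderEmbOfFin h).lt_iff_lt.1 hsq, rfl⟩
    · rintro ⟨a, ha, rfl⟩
      exact ⟨orderEmbOfFin_mem S h a, (S.orderEmbOfFin h).lt_iff_lt.2 ha⟩
  rw [hmap, card_map, Fin.card_Iio]

end OrderEmb

section Complement

variable {N t : ℕ} {T : Finset (Fin (N + t))} (hT : #Tᶜ = N)
include hT

lemma card_eq_of_card_compl : #T = t := by
  have hle := card_le_univ T
  rw [card_compl, Fintype.card_fin] at hT
  rw [Fintype.card_fin] at hle
  omega

lemma le_orderEmbOfFin_compl (q : Fin N) : (q : ℕ) ≤ Tᶜ.orderEmbOfFin hT q := by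
  have hsub : {s ∈ Tᶜ | s < Tᶜ.orderEmbOfFin hT q} ⊆ Iio (Tᶜ.orderEmbOfFin hT q) :=
    fun s hs => mem_Iio.2 (mem_filter.1 hs).2
  simpa [card_filter_lt_orderEmbOfFin] using card_le_card hsub

lemma orderEmbOfFin_compl_le (q : Fin N) : (Tᶜ.orderEmbOfFin hT q : ℕ) ≤ q + t := by
  have hsub : Iio (Tᶜ.orderEmbOfFin hT q) ⊆ {s ∈ Tᶜ | s < Tᶜ.orderEmbOfFin hT q} ∪ T := by
    intro s hs
    by_cases hsT : s ∈ T
    · exact mem_union_right _ hsT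
    · exact mem_union_left _ (mem_filter.2 ⟨mem_compl.2 hsT, mem_Iio.1 hs⟩)
  have := (card_le_card hsub).trans (card_union_le _ _)
  rwa [Fin.card_Iio, card_filter_lt_orderEmbOfFin, card_eq_of_card_compl hT] at this

lemma orderEmbOfFin_compl_lt {v : ℕ} (hTv : ∀ p ∈ T, v ≤ (p : ℕ)) {q : Fin N}
    (hqv : (q : ℕ) < v) : (Tᶜ.orderEmbOfFin hT q : ℕ) < v := by
  by_contra! hvq
  have hsub : ({p | (p : ℕ) < v} : Finset (Fin (N + t))) ⊆
      {s ∈ Tᶜ | s < Tᶜ.orderEmbOfFin hT q} := by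
    intro p hp
    simp only [mem_filter, mem_univ, true_and] at hp
    refine mem_filter.2 ⟨mem_compl.2 fun hpT => ?_, Fin.lt_def.2 (hp.trans_le hvq)⟩
    exact (hp.trans_le (hTv p hpT)).false
  have := card_le_card hsub
  rw [Fin.card_filter_val_lt, card_filter_lt_orderEmbOfFin] at this
  have := (Tᶜ.orderEmbOfFin hT q).isLt
  omega

lemma add_le_orderEmbOfFin_compl {v : ℕ} (hTv : ∀ p ∈ T, (p : ℕ) < v + t) {q : Fin N}
    (hvq : v ≤ q) : v + t ≤ (Tᶜ.orderEmbOfFin hT q : ℕ) := by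
  by_contra! hqv
  set e := Tᶜ.orderEmbOfFin hT
  have hsub :
      T ∪ insert (e q) {s ∈ Tᶜ | s < e q} ⊆ ({p | (p : ℕ) < v + t} : Finset (Fin (N + t))) := by
    intro p hp
    simp only [mem_union, mem_insert, mem_filter] at hp
    simp only [mem_filter, mem_univ, true_and]
    rcases hp with hp | rfl | ⟨-, hp⟩
    · exact hTv p hp
    · exact hqv
    · exact (Fin.lt_def.1 hp).trans hqv
  have hdisj : Disjoint T (insert (e q) {s ∈ Tᶜ | s < e q}) := by
    refine disjoint_left.2 fun p hpT hp => ?_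
    simp only [mem_insert, mem_filter] at hp
    rcases hp with rfl | ⟨hp, -⟩
    · exact (mem_compl.1 (orderEmbOfFin_mem _ hT q)) hpT
    · exact mem_compl.1 hp hpT
  have := card_le_card hsub
  rw [card_union_of_disjoint hdisj, card_insert_of_notMem (by simp),
    card_filter_lt_orderEmbOfFin, card_eq_of_card_compl hT, Fin.card_filter_val_lt] at this
  omega

lemma mem_or_exists_orderEmbOfFin_compl (p : Fin (N + t)) :
    p ∈ T ∨ ∃ q, Tᶜ.orderEmbOfFin hT q = p := by
  by_cases hp : p ∈ T
  · exact Or.inl hp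
  · refine Or.inr ?_
    rw [← Set.mem_range, range_orderEmbOfFin]
    exact mem_compl.2 hp

lemma orderEmbOfFin_compl_notMem (q : Fin N) : Tᶜ.orderEmbOfFin hT q ∉ T :=
  mem_compl.1 (orderEmbOfFin_mem _ hT q)

end Complement

end Finset

lemma IsPartialOrder.lex_of_key {α β : Type*} [PartialOrder β] {r : α → α → Prop}
    [IsPartialOrder α r] (key : α → β) :
    IsPartialOrder α fun i j => key i < key j ∨ key i = key j ∧ r i j where
  refl i := Or.inr ⟨rfl, refl i⟩
  trans i j k := by
    rintro (hij | ⟨hij, hij'⟩) (hjk | ⟨hjk, hjk'⟩)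
    · exact Or.inl (hij.trans hjk)
    · exact Or.inl (hjk ▸ hij)
    · exact Or.inl (hij ▸ hjk)
    · exact Or.inr ⟨hij.trans hjk, _root_.trans hij' hjk'⟩
  antisymm i j := by
    rintro (hij | ⟨hij, hij'⟩) (hji | ⟨hji, hji'⟩)
    · exact absurd (hij.trans hji) (lt_irrefl _)
    · exact absurd hji (hij.ne')
    · exact absurd hij (hji.ne')
    · exact antisymm hij' hji'

namespace Polynomial

lemma natDegree_sum_eq_of_leadingCoeff_pos {R ι : Type*} [Semiring R] [PartialOrder R]
    [IsOrderedCancelAddMonoid R] {s : Finset ι} {p : ι → R[X]} {k : ℕ}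
    (hpos : ∀ i ∈ s, 0 < (p i).leadingCoeff) (hle : ∀ i ∈ s, (p i).natDegree ≤ k)
    (hk : ∃ i ∈ s, (p i).natDegree = k) : (∑ i ∈ s, p i).natDegree = k := by
  refine (natDegree_sum_le_of_forall_le _ _ hle).antisymm (le_natDegree_of_ne_zero ?_)
  have hcoeff (i) (hi : i ∈ s) : 0 ≤ (p i).coeff k := by
    rcases (hle i hi).lt_or_eq with h | rfl
    · rw [coeff_eq_zero_of_natDegree_lt h]
    · exact (hpos i hi).le
  obtain ⟨i, hi, rfl⟩ := hk
  rw [finsetSum_coeff]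
  exact (Finset.sum_pos' hcoeff ⟨i, hi, hpos i hi⟩).ne'

variable (K : Type*) [Field K]

noncomputable def choosePoly (g : ℕ) : K[X] :=
  C (g.factorial : K)⁻¹ * (ascPochhammer K g).comp (X + C 1)

variable [CharZero K]

lemma eval_choosePoly (g t : ℕ) : (choosePoly K g).eval (t : K) = ((g + t).choose t : K) := by
  have hfac : (g.factorial : K) ≠ 0 := Nat.cast_ne_zero.2 g.factorial_ne_zero
  rw [choosePoly, eval_mul, eval_C, eval_comp, eval_add, eval_X, eval_C, ← Nat.cast_succ,
    ascPochhammer_nat_eq_natCast_ascFactorial, Nat.ascFactorial_eq_factorial_mul_choose,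
    add_comm g, Nat.choose_symm_add]
  push_cast
  field_simp

lemma natDegree_choosePoly (g : ℕ) : (choosePoly K g).natDegree = g := by
  rw [choosePoly, natDegree_C_mul (inv_ne_zero (Nat.cast_ne_zero.2 g.factorial_ne_zero)),
    natDegree_comp, ascPochhammer_natDegree, natDegree_X_add_C, mul_one]

lemma leadingCoeff_choosePoly_pos [LinearOrder K] [IsStrictOrderedRing K] (g : ℕ) :
    0 < (choosePoly K g).leadingCoeff := by
  rw [choosePoly, leadingCoeff_C_mul_of_isUnit (IsUnit.mk0 _ (by positivity)),
    ((monic_ascPochhammer K g).comp_X_add_C 1).leadingCoeff, mul_one]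
  positivity

end Polynomial

namespace LexSum

section Words

variable {α : Type*} {n : ℕ}

def RespectsOrder (r : α → α → Prop) (c : Fin n → α) : Prop :=
  ∀ p q, r (c p) (c q) → c p ≠ c q → p < q

lemma RespectsOrder.mono {r s : α → α → Prop} (hrs : r ≤ s) {c : Fin n → α}
    (hc : RespectsOrder s c) : RespectsOrder r c :=
  fun p q h => hc p q (hrs _ _ h)

variable [DecidableEq α]

def HasCounts (μ : α → ℕ) (c : Fin n → α) : Prop :=
  ∀ i, #{p | c p = i} = μ i

lemma ne_of_hasCounts {μ : α → ℕ} {c : Fin n → α} (hc : HasCounts μ c) {x : α} (hμ : μ x = 0)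
    (p : Fin n) : c p ≠ x := by
  have hx := hc x
  rw [hμ, card_eq_zero, filter_eq_empty_iff] at hx
  exact hx (mem_univ p)

noncomputable def linWords [Fintype α] (r : α → α → Prop) (μ : α → ℕ) (n : ℕ) :
    Finset (Fin n → α) :=
  {c | HasCounts μ c ∧ RespectsOrder r c}

lemma linWords_nonempty [Fintype α] (r : α → α → Prop) [IsPartialOrder α r] (μ : α → ℕ) :
    (linWords r μ (∑ i, μ i)).Nonempty := by
  obtain ⟨s, hs, hrs⟩ := extend_partialOrder r
  let L := (∑ i, Multiset.replicate (μ i) i).sort s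
  have hL : L.length = ∑ i, μ i := by simp [L]
  let v : List.Vector α (∑ i, μ i) := ⟨L, hL⟩
  refine ⟨v.get, mem_filter.2 ⟨mem_univ _, fun i => ?_, fun p q hpq hne => ?_⟩⟩
  · rw [Fin.card_filter_univ_eq_vector_get_eq_count]
    simp only [v, L, List.Vector.toList_mk]
    rw [← Multiset.coe_count, Multiset.sort_eq]
    simp [Multiset.count_sum', Multiset.count_replicate]
  · by_contra hqp
    have hsorted := List.pairwise_iff_get.1
      (Multiset.pairwise_sort (∑ i, Multiset.replicate (μ i) i) s)
    obtain hqp | rfl := (not_lt.1 hqp).lt_or_eq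
    · exact hne (antisymm (hrs _ _ hpq) (hsorted (q.cast hL.symm) (p.cast hL.symm) hqp))
    · exact hne rfl

end Words

section Linearizations

variable {m₀ : ℕ} {μ : Fin m₀ → ℕ} {n : ℕ}

def wordOf (φ : LexSumChains m₀ μ ≃ Fin n) : Fin n → Fin m₀ := fun p => (φ.symm p).1

lemma hasCounts_wordOf (φ : LexSumChains m₀ μ ≃ Fin n) : HasCounts μ (wordOf φ) := by
  intro i
  rw [← card_fin (μ i), ← card_map (Function.Embedding.sigmaMk (β := fun i => Fin (μ i)) i)]
  refine (card_equiv φ fun ⟨j, a⟩ => ?_).symm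
  rw [mem_filter]
  simp only [mem_map, mem_univ, true_and, wordOf, Equiv.symm_apply_apply]
  constructor
  · rintro ⟨b, hb⟩
    exact congrArg Sigma.fst hb.symm
  · rintro rfl
    exact ⟨a, rfl⟩

noncomputable def chainsEquivOfCounts (c : Fin n → Fin m₀) (hc : HasCounts μ c) :
    LexSumChains m₀ μ ≃ Fin n :=
  (Equiv.sigmaCongrRight fun i => ((univ.filter (c · = i)).orderIsoOfFin (hc i)).toEquiv.trans
    (Equiv.subtypeEquivRight fun p => by simp)).trans (Equiv.sigmaFiberEquiv c)

lemma chainsEquivOfCounts_apply (c : Fin n → Fin m₀) (hc : HasCounts μ c)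
    (x : LexSumChains m₀ μ) :
    chainsEquivOfCounts c hc x = (univ.filter (c · = x.1)).orderEmbOfFin (hc x.1) x.2 := rfl

variable (r : Fin m₀ → Fin m₀ → Prop)

lemma respectsOrder_wordOf {φ : LexSumChains m₀ μ ≃ Fin (∑ i, μ i)} (hφ : IsLin r μ φ) :
    RespectsOrder r (wordOf φ) := by
  intro p q hr hne
  have hpq := hφ _ _ (Or.inr ⟨hne, hr⟩)
  simp only [Equiv.apply_symm_apply] at hpq
  exact hpq.lt_of_ne fun h => hne (by rw [h])

lemma isLin_chainsEquivOfCounts {c : Fin (∑ i, μ i) → Fin m₀} (hc : HasCounts μ c)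
    (hr : RespectsOrder r c) : IsLin r μ (chainsEquivOfCounts c hc) := by
  have hmem (x : LexSumChains m₀ μ) : c (chainsEquivOfCounts c hc x) = x.1 :=
    (mem_filter.1 (orderEmbOfFin_mem _ (hc x.1) x.2)).2
  rintro ⟨i, a⟩ ⟨j, b⟩ (⟨rfl, hab⟩ | ⟨hij, hrij⟩)
  · exact (orderEmbOfFin _ (hc i)).monotone hab
  · refine (hr _ _ ?_ ?_).le <;> rw [hmem, hmem] <;> assumption

lemma chainsEquivOfCounts_wordOf {φ : LexSumChains m₀ μ ≃ Fin (∑ i, μ i)} (hφ : IsLin r μ φ) :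
    chainsEquivOfCounts (wordOf φ) (hasCounts_wordOf φ) = φ := by
  refine Equiv.ext fun ⟨i, j⟩ => ?_
  rw [chainsEquivOfCounts_apply]
  refine (congrFun (orderEmbOfFin_unique (hasCounts_wordOf φ i)
    (f := fun j => φ ⟨i, j⟩) ?_ ?_) j).symm
  · exact fun j => mem_filter.2 ⟨mem_univ _, by simp [wordOf]⟩
  · intro a b hab
    refine (hφ ⟨i, a⟩ ⟨i, b⟩ (Or.inl ⟨rfl, hab.le⟩)).lt_of_ne fun h => hab.ne ?_
    simpa using φ.injective h

noncomputable def linearizationsEquivLinWords :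
    {φ // IsLin r μ φ} ≃ {c // c ∈ linWords r μ (∑ i, μ i)} where
  toFun φ := ⟨wordOf φ.1,
    mem_filter.2 ⟨mem_univ _, hasCounts_wordOf _, respectsOrder_wordOf r φ.2⟩⟩
  invFun c := ⟨chainsEquivOfCounts c.1 (mem_filter.1 c.2).2.1,
    isLin_chainsEquivOfCounts r _ (mem_filter.1 c.2).2.2⟩
  left_inv φ := Subtype.ext (chainsEquivOfCounts_wordOf r φ.2)
  right_inv _ := rfl

lemma lplus_eq_card_linWords : Lplus m₀ r μ = #(linWords r μ (∑ i, μ i)) := by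
  rw [Lplus, Nat.card_congr (linearizationsEquivLinWords r), Nat.card_eq_fintype_card,
    Fintype.card_coe]

end Linearizations

section Slots

variable {α : Type*} [DecidableEq α] (r : α → α → Prop) (x : α) {N : ℕ}

/- Letters `x` can be inserted into `d` only after the last letter strictly below `x` and before
the first letter strictly above it: these are the positions `firstSlot` and `lastSlot`, which
default to `0` and `N` when there is no such letter. -/

noncomputable def firstSlot (d : Fin N → α) : ℕ :=
  ({q | r (d q) x ∧ d q ≠ x} : Finset (Fin N)).sup fun q : Fin N => (q : ℕ) + 1

noncomputable def lastSlot (d : Fin N → α) : ℕ :=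
  ({q | r x (d q) ∧ d q ≠ x} : Finset (Fin N)).fold min N fun q : Fin N => (q : ℕ)

noncomputable def windowLength (d : Fin N → α) : ℕ :=
  lastSlot r x d - firstSlot r x d

noncomputable def slots (d : Fin N → α) (t : ℕ) : Finset (Fin (N + t)) :=
  {p | firstSlot r x d ≤ p ∧ p < lastSlot r x d + t}

variable {r x} {d : Fin N → α}

lemma firstSlot_le_iff {v : ℕ} :
    firstSlot r x d ≤ v ↔ ∀ q, r (d q) x → d q ≠ x → (q : ℕ) < v := by
  simp [firstSlot, Finset.sup_le_iff]

lemma lt_firstSlot {q : Fin N} (hq : r (d q) x) (hqx : d q ≠ x) : (q : ℕ) < firstSlot r x d :=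
  Finset.le_sup (f := fun q : Fin N => (q : ℕ) + 1) (by simp [hq, hqx])

lemma lastSlot_le {q : Fin N} (hq : r x (d q)) (hqx : d q ≠ x) : lastSlot r x d ≤ q :=
  (fold_min_le _).2 (Or.inr ⟨q, by simp [hq, hqx], le_rfl⟩)

lemma lastSlot_le_length : lastSlot r x d ≤ N :=
  (fold_min_le _).2 (Or.inl le_rfl)

lemma lt_lastSlot_add_iff {v t : ℕ} :
    v < lastSlot r x d + t ↔ v < N + t ∧ ∀ q, r x (d q) → d q ≠ x → v < q + t := by
  rw [lastSlot, ← fold_hom (op' := min) (m := (· + t)) fun a b => (min_add_add_right a b t).symm]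
  simp only [lt_fold_min, mem_filter, mem_univ, true_and, and_imp]

lemma firstSlot_le_lastSlot [IsPartialOrder α r] (hd : RespectsOrder r d) :
    firstSlot r x d ≤ lastSlot r x d := by
  refine firstSlot_le_iff.2 fun a ha hax => ?_
  have hlt : (a : ℕ) < lastSlot r x d + 0 := lt_lastSlot_add_iff.2 ⟨a.isLt, fun b hb hbx => ?_⟩
  · exact hlt
  refine hd a b (_root_.trans ha hb) fun hab => hax ?_
  exact antisymm ha (hab ▸ hb)

end Slots

section Insertion

variable {α : Type*} [DecidableEq α] {r : α → α → Prop} {x : α} {N t : ℕ}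
  {T : Finset (Fin (N + t))} (hT : #Tᶜ = N)

-- `c` is `d` with letters `x` inserted at the positions in `T`.
variable {c : Fin (N + t) → α} {d : Fin N → α}
  (hce : ∀ q, c (Tᶜ.orderEmbOfFin hT q) = d q) (hcT : ∀ p, c p = x ↔ p ∈ T)
include hce hcT

lemma respectsOrder_iff_of_split :
    RespectsOrder r c ↔ RespectsOrder r d ∧ T ⊆ slots r x d t := by
  set e := Tᶜ.orderEmbOfFin hT
  constructor
  · intro hc
    refine ⟨fun q q' h hne => ?_, fun p hp => ?_⟩
    · rw [← hce, ← hce] at h hne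
      exact e.lt_iff_lt.1 (hc _ _ h hne)
    have hpx : c p = x := (hcT p).2 hp
    refine mem_filter.2 ⟨mem_univ _, firstSlot_le_iff.2 fun q hq hqx => ?_,
      lt_lastSlot_add_iff.2 ⟨p.isLt, fun q hq hqx => ?_⟩⟩
    · have hqp := hc (e q) p (by rwa [hce, hpx]) (by rwa [hce, hpx])
      exact (le_orderEmbOfFin_compl hT q).trans_lt hqp
    · have hpq := hc p (e q) (by rwa [hce, hpx]) (by rw [hce, hpx]; exact hqx.symm)
      exact (Fin.lt_def.1 hpq).trans_le (orderEmbOfFin_compl_le hT q)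
  · rintro ⟨hd, hTs⟩ p p' h hne
    have hTslots (p) (hp : p ∈ T) := (mem_filter.1 (hTs hp)).2
    rcases mem_or_exists_orderEmbOfFin_compl hT p with hp | ⟨q, rfl⟩ <;>
      rcases mem_or_exists_orderEmbOfFin_compl hT p' with hp' | ⟨q', rfl⟩
    · exact absurd (((hcT p).2 hp).trans ((hcT p').2 hp').symm) hne
    · rw [hce, (hcT p).2 hp] at h hne
      have hlast := add_le_orderEmbOfFin_compl hT (fun p hp => (hTslots p hp).2)
        (lastSlot_le h hne.symm)
      exact Fin.lt_def.2 ((hTslots p hp).2.trans_le hlast)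
    · rw [hce, (hcT p').2 hp'] at h hne
      have hfirst :=
        orderEmbOfFin_compl_lt hT (fun p hp => (hTslots p hp).1) (lt_firstSlot h hne)
      exact Fin.lt_def.2 (hfirst.trans_le (hTslots p' hp').1)
    · rw [hce, hce] at h hne
      exact e.lt_iff_lt.2 (hd q q' h hne)

lemma card_filter_eq_of_split {i : α} (hix : i ≠ x) : #{p | c p = i} = #{q | d q = i} := by
  rw [← card_map (Tᶜ.orderEmbOfFin hT).toEmbedding]
  congr 1
  ext p
  simp only [mem_filter, mem_univ, true_and, mem_map, RelEmbedding.coe_toEmbedding]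
  constructor
  · intro hpi
    rcases mem_or_exists_orderEmbOfFin_compl hT p with hp | ⟨q, rfl⟩
    · exact absurd (hpi.symm.trans ((hcT p).2 hp)) hix
    · exact ⟨q, (hce q).symm.trans hpi, rfl⟩
  · rintro ⟨q, hqi, rfl⟩
    exact (hce q).trans hqi

lemma hasCounts_update_iff_of_split {μ : α → ℕ} (hμ : μ x = 0) :
    HasCounts (Function.update μ x t) c ↔ HasCounts μ d := by
  refine forall_congr' fun i => ?_
  rcases eq_or_ne i x with rfl | hix
  · have hc : #{p | c p = i} = t := by
      have hfilter : ({p | c p = i} : Finset (Fin (N + t))) = T := by ext p; simp [hcT]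
      rw [hfilter, card_eq_of_card_compl hT]
    have hd : #{q | d q = i} = 0 := by
      refine card_eq_zero.2 (filter_eq_empty_iff.2 fun q _ hq => ?_)
      exact orderEmbOfFin_compl_notMem hT q ((hcT _).1 ((hce q).trans hq))
    simp [hc, hd, hμ]
  · rw [card_filter_eq_of_split hT hce hcT hix, Function.update_of_ne hix]

lemma mem_linWords_update_iff_of_split [Fintype α] {μ : α → ℕ} (hμ : μ x = 0) :
    c ∈ linWords r (Function.update μ x t) (N + t) ↔
      d ∈ linWords r μ N ∧ T ⊆ slots r x d t := by
  simp only [linWords, mem_filter, mem_univ, true_and,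
    hasCounts_update_iff_of_split hT hce hcT hμ, respectsOrder_iff_of_split hT hce hcT, and_assoc]

end Insertion

section Counting

variable {α : Type*} [DecidableEq α] [Fintype α] {r : α → α → Prop} {x : α} {μ : α → ℕ}
  {N t : ℕ}

lemma card_linWords_update_filter_eq (hμ : μ x = 0) {T : Finset (Fin (N + t))}
    (hT : #Tᶜ = N) :
    #{c ∈ linWords r (Function.update μ x t) (N + t) | ({p | c p = x} : Finset _) = T} =
      #{d ∈ linWords r μ N | T ⊆ slots r x d t} := by
  set e := Tᶜ.orderEmbOfFin hT
  have hextend (d : Fin N → α) (q) : Function.extend e d (fun _ => x) (e q) = d q :=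
    e.injective.extend_apply _ _ q
  have hextend_eq {d : Fin N → α} (hd : HasCounts μ d) (p) :
      Function.extend e d (fun _ => x) p = x ↔ p ∈ T := by
    rcases mem_or_exists_orderEmbOfFin_compl hT p with hp | ⟨q, rfl⟩
    · refine iff_of_true (Function.extend_apply' _ _ _ fun ⟨q, hq⟩ => ?_) hp
      exact orderEmbOfFin_compl_notMem hT q (hq ▸ hp)
    · exact iff_of_false (hextend d q ▸ ne_of_hasCounts hd hμ q)
        (orderEmbOfFin_compl_notMem hT q)
  have hpreimage {c : Fin (N + t) → α} (hc : ({p | c p = x} : Finset _) = T) (p) :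
      c p = x ↔ p ∈ T := by
    rw [← hc, mem_filter]
    simp
  refine card_nbij' (fun c => c ∘ e) (fun d => Function.extend e d fun _ => x) ?_ ?_ ?_ ?_
  · intro c hc
    obtain ⟨hc, hcT⟩ := mem_filter.1 (mem_coe.1 hc)
    exact mem_filter.2
      ((mem_linWords_update_iff_of_split hT (fun _ => rfl) (hpreimage hcT) hμ).1 hc)
  · intro d hd
    obtain ⟨hd, hTd⟩ := mem_filter.1 (mem_coe.1 hd)
    have hcT := hextend_eq (mem_filter.1 hd).2.1
    refine mem_filter.2
      ⟨(mem_linWords_update_iff_of_split hT (hextend d) hcT hμ).2 ⟨hd, hTd⟩, ?_⟩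
    ext p
    simp [hcT]
  · intro c hc
    obtain ⟨hc, hcT⟩ := mem_filter.1 (mem_coe.1 hc)
    have hd := (mem_filter.1 ((mem_linWords_update_iff_of_split hT (fun _ => rfl)
      (hpreimage hcT) hμ).1 hc).1).2.1
    funext p
    rcases mem_or_exists_orderEmbOfFin_compl hT p with hp | ⟨q, rfl⟩
    · exact ((hextend_eq hd p).2 hp).trans ((hpreimage hcT p).2 hp).symm
    · exact hextend _ q
  · intro d _
    exact Function.extend_comp e.injective _ _

omit [Fintype α] in
lemma card_slots [IsPartialOrder α r] {d : Fin N → α} (hd : RespectsOrder r d) :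
    #(slots r x d t) = windowLength r x d + t := by
  have hfirst := firstSlot_le_lastSlot (x := x) hd
  have hlast := lastSlot_le_length (r := r) (x := x) (d := d)
  rw [slots, Fin.card_filter_le_and_lt (by omega), windowLength]
  omega

lemma card_linWords_update [IsPartialOrder α r] (hμ : μ x = 0) :
    #(linWords r (Function.update μ x t) (N + t)) =
      ∑ d ∈ linWords r μ N, (windowLength r x d + t).choose t := by
  have hmaps : ∀ c ∈ linWords r (Function.update μ x t) (N + t),
      ({p | c p = x} : Finset _) ∈ powersetCard t univ := fun c hc =>
    mem_powersetCard.2 ⟨subset_univ _, by simpa using (mem_filter.1 hc).2.1 x⟩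
  have hcompl {T : Finset (Fin (N + t))} (hT : T ∈ powersetCard t univ) : #Tᶜ = N := by
    simp [card_compl, (mem_powersetCard.1 hT).2]
  rw [card_eq_sum_card_fiberwise hmaps,
    sum_congr rfl fun T hT => card_linWords_update_filter_eq hμ (hcompl hT)]
  refine (sum_card_bipartiteAbove_eq_sum_card_bipartiteBelow _).trans
    (sum_congr rfl fun d hd => ?_)
  have hfilter : {T ∈ powersetCard t (univ : Finset (Fin (N + t))) | T ⊆ slots r x d t} =
      powersetCard t (slots r x d t) := by
    ext T
    simp only [mem_filter, mem_powersetCard, subset_univ, true_and]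
    tauto
  rw [bipartiteBelow, hfilter, card_powersetCard, card_slots (mem_filter.1 hd).2.2, add_comm]

lemma lplus_update_eq_sum {m₀ : ℕ} {r : Fin m₀ → Fin m₀ → Prop} [IsPartialOrder (Fin m₀) r]
    {μ : Fin m₀ → ℕ} {x : Fin m₀} (hμ : μ x = 0) (t : ℕ) :
    Lplus m₀ r (Function.update μ x t) =
      ∑ d ∈ linWords r μ (∑ i, μ i), (windowLength r x d + t).choose t := by
  have hsum : ∑ i, Function.update μ x t i = ∑ i, μ i + t := by
    rw [sum_update_of_mem (mem_univ x), ← add_sum_erase _ _ (mem_univ x), hμ,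
      sdiff_singleton_eq_erase]
    omega
  rw [lplus_eq_card_linWords, hsum, card_linWords_update hμ]

end Counting

section Degree

variable {α : Type*} [DecidableEq α] [Fintype α] {r : α → α → Prop} {x : α} {μ : α → ℕ}
  {N : ℕ}

omit [Fintype α] in
lemma card_filter_mem_eq_sum {n : ℕ} {c : Fin n → α} (hc : HasCounts μ c) (K : Finset α) :
    #{p | c p ∈ K} = ∑ i ∈ K, μ i := by
  rw [card_eq_sum_card_fiberwise (f := c) (s := {p | c p ∈ K}) (t := K)
    fun p hp => (mem_filter.1 (mem_coe.1 hp)).2]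
  refine sum_congr rfl fun i hi => ?_
  rw [← hc i, filter_filter]
  congr 1
  ext p
  simp only [mem_filter, mem_univ, true_and, and_iff_right_iff_imp]
  exact fun h => h ▸ hi

omit [Fintype α] in
lemma windowLength_eq_card (d : Fin N → α) :
    windowLength r x d = #{q : Fin N | firstSlot r x d ≤ q ∧ q < lastSlot r x d} := by
  rw [Fin.card_filter_le_and_lt lastSlot_le_length, windowLength]

lemma windowLength_le (hμ : μ x = 0) {d : Fin N → α} (hd : d ∈ linWords r μ N) :
    windowLength r x d ≤ ∑ i ∈ univ.filter (fun i => i ≠ x ∧ ¬ r i x ∧ ¬ r x i), μ i := by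
  have hcounts := (mem_filter.1 hd).2.1
  rw [← card_filter_mem_eq_sum hcounts, windowLength_eq_card]
  refine card_le_card fun q hq => ?_
  obtain ⟨hfirst, hlast⟩ := (mem_filter.1 hq).2
  have hqx := ne_of_hasCounts hcounts hμ q
  refine mem_filter.2 ⟨mem_univ _, mem_filter.2 ⟨mem_univ _, hqx, fun h => ?_, fun h => ?_⟩⟩
  · exact (lt_firstSlot h hqx).not_ge hfirst
  · exact (lastSlot_le h hqx).not_gt hlast

noncomputable def layer (r : α → α → Prop) (x i : α) : ℕ :=
  (if r x i ∧ i ≠ x then 1 else 0) + (if r i x ∧ i ≠ x then 0 else 1)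

omit [Fintype α] in
lemma layer_mono [IsPartialOrder α r] {i j : α} (h : r i j) : layer r x i ≤ layer r x j := by
  have hup : r x i ∧ i ≠ x → r x j ∧ j ≠ x := fun ⟨hxi, hix⟩ =>
    ⟨_root_.trans hxi h, fun hjx => hix (antisymm (hjx ▸ h) hxi)⟩
  have hdown : r j x ∧ j ≠ x → r i x ∧ i ≠ x := fun ⟨hjx, hjx'⟩ =>
    ⟨_root_.trans h hjx, fun hix => hjx' (antisymm hjx (hix ▸ h))⟩
  unfold layer
  split_ifs <;> simp_all

lemma exists_windowLength_eq [IsPartialOrder α r] (hμ : μ x = 0) :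
    ∃ d ∈ linWords r μ (∑ i, μ i),
      windowLength r x d = ∑ i ∈ univ.filter (fun i => i ≠ x ∧ ¬ r i x ∧ ¬ r x i), μ i := by
  -- A word of the refinement of `r` by `layer` lists the letters below `x` first and those above
  -- `x` last, so all letters incomparable with `x` lie between `firstSlot` and `lastSlot`.
  have := IsPartialOrder.lex_of_key (r := r) (layer r x)
  obtain ⟨d, hd⟩ := linWords_nonempty
    (fun i j => layer r x i < layer r x j ∨ layer r x i = layer r x j ∧ r i j) μ
  obtain ⟨-, hcounts, hresp⟩ := mem_filter.1 hd
  have hdr : d ∈ linWords r μ _ := mem_filter.2 ⟨mem_univ _, hcounts,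
    hresp.mono fun i j h => (layer_mono h).lt_or_eq.imp_right (⟨·, h⟩)⟩
  refine ⟨d, hdr, (windowLength_le hμ hdr).antisymm ?_⟩
  rw [← card_filter_mem_eq_sum hcounts, windowLength_eq_card]
  refine card_le_card fun q hq => ?_
  obtain ⟨hqx, hqlo, hqhi⟩ := (mem_filter.1 (mem_filter.1 hq).2).2
  have hq1 : layer r x (d q) = 1 := by simp [layer, hqlo, hqhi]
  refine mem_filter.2 ⟨mem_univ _, firstSlot_le_iff.2 fun a ha hax => ?_, ?_⟩
  · have ha0 : layer r x (d a) = 0 := by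
      have hxa : ¬r x (d a) := fun h => hax (antisymm ha h)
      simp [layer, ha, hax, hxa]
    exact hresp a q (Or.inl (by omega)) fun h => hqlo (h ▸ ha)
  · have hlt : (q : ℕ) < lastSlot r x d + 0 :=
      lt_lastSlot_add_iff.2 ⟨q.isLt, fun b hb hbx => ?_⟩
    · exact hlt
    have hb2 : layer r x (d b) = 2 := by
      have hbx' : ¬r (d b) x := fun h => hbx (antisymm h hb)
      simp [layer, hb, hbx, hbx']
    exact hresp q b (Or.inl (by omega)) fun h => hqhi (h ▸ hb)

end Degree

end LexSum

/-- Fixing all the `mᵢ` with `i ≠ i₀`, the function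
`m_{i₀} ↦ L₊(P₀; m₁,…,m_{m₀})` is a polynomial in `m_{i₀}` whose degree is the sum of the
values `mᵢ` over those `i ≠ i₀` such that `xᵢ` is incomparable with `x_{i₀}` in `P₀`. -/
theorem lexSum_linearizationCount_polynomial_in_one_variable (m₀ : ℕ)
    (r0 : Fin m₀ → Fin m₀ → Prop) (hr0 : IsPartialOrder (Fin m₀) r0)
    (i₀ : Fin m₀) (m : Fin m₀ → ℕ) :
    ∃ f : Polynomial ℚ,
      (∀ t : ℕ, (Lplus m₀ r0 (Function.update m i₀ t) : ℚ) = f.eval (t : ℚ)) ∧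
      f.natDegree =
        ∑ i ∈ Finset.univ.filter (fun i : Fin m₀ => i ≠ i₀ ∧ ¬ r0 i i₀ ∧ ¬ r0 i₀ i), m i := by
  open LexSum Polynomial Finset in
  have := hr0
  set μ := Function.update m i₀ 0
  have hμ : μ i₀ = 0 := Function.update_self i₀ 0 m
  refine ⟨∑ d ∈ linWords r0 μ (∑ i, μ i), choosePoly ℚ (windowLength r0 i₀ d), fun t => ?_, ?_⟩
  · rw [← Function.update_idem (0 : ℕ) t m, lplus_update_eq_sum hμ, eval_finsetSum]
    simp [eval_choosePoly]
  · obtain ⟨d, hd, hdK⟩ := exists_windowLength_eq (r := r0) hμ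
    have hK : ∑ i ∈ univ.filter (fun i => i ≠ i₀ ∧ ¬ r0 i i₀ ∧ ¬ r0 i₀ i), μ i =
        ∑ i ∈ univ.filter (fun i => i ≠ i₀ ∧ ¬ r0 i i₀ ∧ ¬ r0 i₀ i), m i :=
      sum_congr rfl fun i hi => Function.update_of_ne (mem_filter.1 hi).2.1 _ _
    rw [← hK]
    exact natDegree_sum_eq_of_leadingCoeff_pos (fun d _ => leadingCoeff_choosePoly_pos ℚ _)
      (fun d hd => (natDegree_choosePoly ℚ _).trans_le (windowLength_le hμ hd))
      ⟨d, hd, (natDegree_choosePoly ℚ _).trans hdK⟩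
end

section
/- Let P₀ be a finite poset with elements x₁,…,x_{m₀}, and let S ⊆ |P₀| be a subset that is not a chain in P₀ (i.e. S contains two incomparable elements). Then for every choice of fixed nonnegative values mᵢ for the i with xᵢ ∉ S, the function of the remaining variables (mᵢ for xᵢ ∈ S) given by L₊(P₀; m₁,…,m_{m₀}) is not a polynomial function; indeed there is no polynomial in card(S) variables agreeing with it at all tuples of nonnegative integers. -/
/-!
If `xᵢ` and `xⱼ` are incomparable, the chains `Cᵢ` and `Cⱼ` can be interleaved freely. Identifying
`xᵢ` with `xⱼ` turns `P₀` into a preorder; ordering the chains by the size of their down-sets in it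
(ties broken by index) is compatible with `P₀` and puts `Cᵢ` and `Cⱼ` into one common block, inside
which any shuffle of the two chains respects the lexicographic sum. Deciding independently, for each
`s < min mᵢ mⱼ`, whether the `s`-th element of `Cᵢ` or of `Cⱼ` comes first gives
`L₊ ≥ 2 ^ min mᵢ mⱼ`. With `mᵢ = mⱼ = n` a polynomial agreeing with `L₊` would restrict to a
univariate polynomial dominating `2ⁿ`, which is impossible.
-/

open scoped Classical

open Finset

section Glue

variable {α : Type*} (r : α → α → Prop) (i j : α)

-- `r` with `i` and `j` identified: a preorder whenever `r` is one.
def glueRel (u t : α) : Prop := r u t ∨ ((r u i ∨ r u j) ∧ (r i t ∨ r j t))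

noncomputable def glueHeight [Fintype α] (t : α) : ℕ := #(univ.filter (glueRel r i j · t))

variable {r i j}

theorem glueRel_trans [IsTrans α r] {u t w : α} :
    glueRel r i j u t → glueRel r i j t w → glueRel r i j u w := by
  rintro (hut | ⟨hu, ht⟩) (htw | ⟨ht', hw⟩)
  · exact Or.inl (trans_of r hut htw)
  · exact Or.inr ⟨ht'.imp (trans_of r hut) (trans_of r hut), hw⟩
  · exact Or.inr ⟨hu, ht.imp (trans_of r · htw) (trans_of r · htw)⟩
  · exact Or.inr ⟨hu, hw⟩

theorem glueHeight_left_eq_right [Fintype α] [Std.Refl r] :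
    glueHeight r i j i = glueHeight r i j j := by
  unfold glueHeight
  congr 1
  ext u
  simp only [mem_filter, glueRel, refl_of r]
  tauto

theorem glueHeight_lt [Fintype α] [IsPartialOrder α r] (hij : ¬ r i j) (hji : ¬ r j i) {a b : α}
    (hab : r a b) (hne : a ≠ b) : glueHeight r i j a < glueHeight r i j b := by
  have hba : ¬ r b a := fun h => hne (antisymm hab h)
  have hsub : univ.filter (glueRel r i j · a) ⊆ univ.filter (glueRel r i j · b) := by
    intro u
    simp only [mem_filter, mem_univ, true_and]
    exact (glueRel_trans · (Or.inl hab))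
  refine card_lt_card ((ssubset_iff_of_subset hsub).2 ⟨b, ?_, ?_⟩)
  · rw [mem_filter]
    simp [glueRel, refl_of r b]
  · rw [mem_filter]
    simp only [mem_univ, true_and, glueRel]
    rintro (h | ⟨hb | hb, ha | ha⟩)
    · exact hba h
    · exact hba (trans_of r hb ha)
    · exact hji (trans_of r ha (trans_of r hab hb))
    · exact hij (trans_of r ha (trans_of r hab hb))
    · exact hba (trans_of r hb ha)

end Glue

theorem exists_equiv_fin_le_iff_of_injective {X α : Type*} [Fintype X] [LinearOrder α] {N : ℕ}
    (hN : Fintype.card X = N) {κ : X → α} (hκ : Function.Injective κ) :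
    ∃ e : X ≃ Fin N, ∀ x y, e x ≤ e y ↔ κ x ≤ κ y := by
  let : LinearOrder X := LinearOrder.lift' κ hκ
  exact ⟨(Fintype.orderIsoFinOfCardEq X hN).symm.toEquiv, fun x y =>
    (Fintype.orderIsoFinOfCardEq X hN).symm.le_iff_le⟩

theorem LexSumChains.ext {m₀ : ℕ} {m : Fin m₀ → ℕ} {x y : LexSumChains m₀ m} (h₁ : x.1 = y.1)
    (h₂ : (x.2 : ℕ) = y.2) : x = y :=
  Sigma.ext h₁ ((Fin.heq_ext_iff (congrArg m h₁)).2 h₂)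

section Shuffle

variable {m₀ : ℕ} {m : Fin m₀ → ℕ} (r0 : Fin m₀ → Fin m₀ → Prop) (i j : Fin m₀) (p : ℕ → Prop)

-- The chains `i` and `j` share one block, and `⟨i, s⟩` comes after `⟨j, s⟩` exactly when `p s`.
noncomputable def shuffleKey (x : LexSumChains m₀ m) : (ℕ ×ₗ ℕ) ×ₗ ℕ :=
  toLex (toLex (glueHeight r0 i j x.1, if x.1 = j then i else x.1),
    2 * x.2 + if (x.1 = i ∧ p x.2) ∨ (x.1 = j ∧ ¬ p x.2) then 1 else 0)

variable {r0 i j p}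

theorem shuffleKey_injective (hij : i ≠ j) :
    Function.Injective (shuffleKey (m := m) r0 i j p) := by
  intro x y hxy
  simp only [shuffleKey, toLex_inj, Prod.mk.injEq] at hxy
  obtain ⟨⟨-, hblock⟩, hpos⟩ := hxy
  have hs : (x.2 : ℕ) = y.2 := by split_ifs at hpos <;> omega
  refine LexSumChains.ext ?_ hs
  rw [hs] at hpos
  split_ifs at hblock hpos <;> grind

theorem shuffleKey_mono [IsPartialOrder (Fin m₀) r0] (hij : ¬ r0 i j) (hji : ¬ r0 j i)
    {x y : LexSumChains m₀ m} (hxy : lexRel r0 m x y) :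
    shuffleKey r0 i j p x ≤ shuffleKey r0 i j p y := by
  rcases hxy with ⟨hblock, hle⟩ | ⟨hne, hr⟩
  · obtain ⟨t, s⟩ := x
    obtain ⟨u, s'⟩ := y
    dsimp only at hblock hle
    subst hblock
    rcases hle.lt_or_eq with hlt | heq
    · refine Prod.Lex.toLex_le_toLex.2 (Or.inr ⟨rfl, ?_⟩)
      dsimp only
      split_ifs <;> omega
    · rw [Fin.val_inj.1 heq]
  · exact le_of_lt (Prod.Lex.toLex_lt_toLex.2 (Or.inl (Prod.Lex.toLex_lt_toLex.2
      (Or.inl (glueHeight_lt hij hji hr hne)))))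

theorem shuffleKey_lt_iff [Std.Refl r0] (hij : i ≠ j) {s : Fin (m j)} {s' : Fin (m i)}
    (hs : (s : ℕ) = s') :
    shuffleKey r0 i j p ⟨j, s⟩ < shuffleKey r0 i j p ⟨i, s'⟩ ↔ p s := by
  simp only [shuffleKey, glueHeight_left_eq_right (r := r0) (i := i) (j := j)]
  simp only [Prod.Lex.toLex_lt_toLex, hij, hij.symm, hs]
  split_ifs <;> simp_all

end Shuffle

theorem exists_isLin_le_iff_shuffleKey {m₀ : ℕ} {r0 : Fin m₀ → Fin m₀ → Prop}
    [IsPartialOrder (Fin m₀) r0] {i j : Fin m₀} (hij : ¬ r0 i j) (hji : ¬ r0 j i)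
    (m : Fin m₀ → ℕ) (p : ℕ → Prop) :
    ∃ φ, IsLin r0 m φ ∧ ∀ x y, φ x ≤ φ y ↔ shuffleKey r0 i j p x ≤ shuffleKey r0 i j p y := by
  have hne : i ≠ j := by rintro rfl; exact hij (refl_of r0 i)
  obtain ⟨φ, hφ⟩ := exists_equiv_fin_le_iff_of_injective (N := ∑ t, m t) (by simp)
    (shuffleKey_injective (m := m) (p := p) hne)
  exact ⟨φ, fun x y hxy => (hφ x y).2 (shuffleKey_mono hij hji hxy), hφ⟩

theorem two_pow_min_le_Lplus {m₀ : ℕ} {r0 : Fin m₀ → Fin m₀ → Prop} [IsPartialOrder (Fin m₀) r0]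
    {i j : Fin m₀} (hij : ¬ r0 i j) (hji : ¬ r0 j i) (m : Fin m₀ → ℕ) :
    2 ^ min (m i) (m j) ≤ Lplus m₀ r0 m := by
  have hne : i ≠ j := by rintro rfl; exact hij (refl_of r0 i)
  set k := min (m i) (m j)
  let pattern : {φ // IsLin r0 m φ} → Finset (Fin k) := fun φ =>
    univ.filter fun s => φ.1 ⟨j, s.castLE (min_le_right _ _)⟩ < φ.1 ⟨i, s.castLE (min_le_left _ _)⟩
  have hsurj : Function.Surjective pattern := by
    intro T
    obtain ⟨φ, hlin, hφ⟩ :=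
      exists_isLin_le_iff_shuffleKey hij hji m (fun s => ∃ t ∈ T, (t : ℕ) = s)
    refine ⟨⟨φ, hlin⟩, Finset.ext fun s => ?_⟩
    rw [mem_filter, ← not_le, hφ, not_le, shuffleKey_lt_iff hne rfl]
    simp [Fin.val_inj]
  calc 2 ^ k = Nat.card (Finset (Fin k)) := by simp
    _ ≤ Lplus m₀ r0 m := Nat.card_le_card_of_surjective pattern hsurj

theorem Polynomial.isLittleO_eval_natCast_const_pow (P : Polynomial ℝ) {c : ℝ} (hc : 1 < c) :
    (fun n : ℕ => P.eval (n : ℝ)) =o[Filter.atTop] (c ^ ·) := by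
  have hP : P.degree ≤ (X ^ P.natDegree : Polynomial ℝ).degree := by
    simp [P.degree_le_natDegree]
  have hpoly := (P.isBigO_atTop_of_degree_le _ hP).comp_tendsto tendsto_natCast_atTop_atTop
  simp only [Function.comp_def, eval_pow, eval_X] at hpoly
  exact hpoly.trans_isLittleO (isLittleO_pow_const_const_pow_of_one_lt _ hc)

theorem Polynomial.not_forall_two_pow_le_eval (P : Polynomial ℚ) :
    ¬ ∀ n : ℕ, (2 : ℚ) ^ n ≤ P.eval (n : ℚ) := by
  intro h
  have hbig : (fun n : ℕ => (2 : ℝ) ^ n) =O[Filter.atTop]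
      fun n : ℕ => (P.map (algebraMap ℚ ℝ)).eval (n : ℝ) := by
    refine Asymptotics.IsBigO.of_bound 1 (Filter.Eventually.of_forall fun n => ?_)
    rw [Polynomial.eval_natCast_map, one_mul, Real.norm_of_nonneg (by positivity)]
    refine le_trans ?_ (Real.le_norm_self _)
    simpa using (Rat.cast_le (K := ℝ)).2 (h n)
  refine Asymptotics.isLittleO_irrefl (Filter.Frequently.of_forall fun n => by positivity)
    (hbig.trans_isLittleO ((P.map _).isLittleO_eval_natCast_const_pow one_lt_two))

theorem MvPolynomial.exists_polynomial_eval_eq_eval_ite {σ R : Type*} [CommRing R]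
    (f : MvPolynomial σ R) (s : σ → Prop) [DecidablePred s] (c : σ → R) :
    ∃ P : Polynomial R, ∀ x, P.eval x = eval (fun t => if s t then x else c t) f := by
  refine ⟨aeval (fun t => if s t then Polynomial.X else Polynomial.C (c t)) f, fun x => ?_⟩
  rw [aeval_def, polynomial_eval_eval₂]
  congr 1
  · ext
    simp
  · ext t
    split_ifs <;> simp

/-- Theorem, "only if" direction. If `S ⊆ |P₀|` is not a chain, i.e. contains
two incomparable elements, then for every choice of fixed values `mᵢ` for `xᵢ ∉ S`,
`L₊(P₀; m₁,…,m_{m₀})` as a function of the variables `mᵢ` with `xᵢ ∈ S` is not a polynomial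
function: no polynomial in `card S` variables agrees with it at all tuples of nonnegative
integers. -/
theorem lexSum_linearizationCount_not_polynomial_of_not_chain (m₀ : ℕ)
    (r0 : Fin m₀ → Fin m₀ → Prop) (hr0 : IsPartialOrder (Fin m₀) r0)
    (S : Finset (Fin m₀))
    (hS : ∃ i ∈ S, ∃ j ∈ S, i ≠ j ∧ ¬ r0 i j ∧ ¬ r0 j i) (m : Fin m₀ → ℕ) :
    ¬ ∃ f : MvPolynomial {i : Fin m₀ // i ∈ S} ℚ,
        ∀ v : {i : Fin m₀ // i ∈ S} → ℕ,
          (Lplus m₀ r0 (fun i => if h : i ∈ S then v ⟨i, h⟩ else m i) : ℚ) =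
            MvPolynomial.eval (fun j => (v j : ℚ)) f := by
  rintro ⟨f, hf⟩
  obtain ⟨i, hi, j, hj, -, hij, hji⟩ := hS
  let diag (t : {t // t ∈ S}) : Prop := t.1 = i ∨ t.1 = j
  obtain ⟨P, hP⟩ := f.exists_polynomial_eval_eq_eval_ite diag fun t => (m t : ℚ)
  refine P.not_forall_two_pow_le_eval fun n => ?_
  let v (t : {t // t ∈ S}) : ℕ := if diag t then n else m t
  have hbound := two_pow_min_le_Lplus hij hji fun t => if h : t ∈ S then v ⟨t, h⟩ else m t
  have hvi : v ⟨i, hi⟩ = n := if_pos (Or.inl rfl)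
  have hvj : v ⟨j, hj⟩ = n := if_pos (Or.inr rfl)
  simp only [dif_pos hi, dif_pos hj, hvi, hvj, min_self] at hbound
  have hcast : (fun t => ((v t : ℕ) : ℚ)) = fun t => if diag t then (n : ℚ) else m t :=
    funext fun t => Nat.cast_ite _ _ _
  rw [hP, ← hcast, ← hf v]
  exact_mod_cast hbound
end

section
/- Let P = (|P|, ≼) be a finite poset and S a chain in P. Then the ordering ≼ can be strengthened to a partial ordering ≼′ on |P| (i.e. x ≼ y implies x ≼′ y) such that |P| − S is a chain under ≼′, while every element of |P| that is ≼-incomparable with at least one element of S remains ≼′-incomparable with at least one element of S. -/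
/-!
Order `Sᶜ` by the lexicographic key `x ↦ (#{s ∈ S | s ≤ x}, -#{s ∈ S | x ≤ s})`, ties broken by
a linear extension of `≤`, and let `r` be the order generated by `≤` together with this total
order on `Sᶜ`. Both generators lie inside the key order, so `r` is antisymmetric. If `x` is
incomparable with some element of `S`, let `m` be the least `s ∈ S` with `s ≰ x`. Then `x` is
strictly below `m` in the key, so `m` is not `r`-below `x`; and no element of `Sᶜ` above `x` in
the key lies below `m`, so no `r`-path from `x` enters the down-set of `m`.
-/

open Function OrderDual Relation Set

section StrengthenOn

variable {α β : Type*} [PartialOrder α] [LinearOrder β] {C : Set α} {ψ : α → β} {x y m : α}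

def strengthenOn (C : Set α) (ψ : α → β) : α → α → Prop :=
  ReflTransGen fun x y => x ≤ y ∨ (x ∈ C ∧ y ∈ C ∧ ψ x ≤ ψ y)

theorem strengthenOn_of_le (h : x ≤ y) : strengthenOn C ψ x y :=
  ReflTransGen.single (Or.inl h)

theorem isChain_strengthenOn : IsChain (strengthenOn C ψ) C := fun x hx y hy _ =>
  (le_total (ψ x) (ψ y)).imp (fun h => .single (Or.inr ⟨hx, hy, h⟩))
    (fun h => .single (Or.inr ⟨hy, hx, h⟩))

theorem Monotone.le_of_strengthenOn (hψ : Monotone ψ) (h : strengthenOn C ψ x y) :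
    ψ x ≤ ψ y := by
  induction h with
  | refl => rfl
  | tail _ hyz ih => exact ih.trans (hyz.elim (hψ ·) (·.2.2))

theorem isPartialOrder_strengthenOn (hψ : Monotone ψ) (hψ' : Injective ψ) :
    IsPartialOrder α (strengthenOn C ψ) where
  refl _ := .refl
  trans _ _ _ := ReflTransGen.trans
  antisymm _ _ hxy hyx := hψ' ((hψ.le_of_strengthenOn hxy).antisymm (hψ.le_of_strengthenOn hyx))

theorem not_strengthenOn_of_forall_not_le (hψ : Monotone ψ) (hxm : ¬ x ≤ m)
    (h : ∀ z ∈ C, ψ x ≤ ψ z → ¬ z ≤ m) : ¬ strengthenOn C ψ x m := by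
  suffices ∀ y, strengthenOn C ψ x y → ψ x ≤ ψ y ∧ ¬ y ≤ m from fun hr => (this m hr).2 le_rfl
  intro y hy
  induction hy with
  | refl => exact ⟨le_rfl, hxm⟩
  | tail _ hyz ih =>
    rcases hyz with hyz | ⟨-, hz, hyz⟩
    · exact ⟨ih.1.trans (hψ hyz), fun hzm => ih.2 (hyz.trans hzm)⟩
    · exact ⟨ih.1.trans hyz, h _ hz (ih.1.trans hyz)⟩

end StrengthenOn

theorem Set.subset_of_ncard_le_of_subset_or_subset {α : Type*} {s t : Set α} (hs : s.Finite)
    (hst : s ⊆ t ∨ t ⊆ s) (h : s.ncard ≤ t.ncard) : s ⊆ t :=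
  hst.elim id fun hts => (eq_of_subset_of_ncard_le hts h hs).symm.subset

section ChainRank

variable {α : Type*} [PartialOrder α] {S : Set α} {x z m : α}

theorem IsChain.inter_Ici_subset_or_subset (hS : IsChain (· ≤ ·) S) (x y : α) :
    S ∩ Ici x ⊆ S ∩ Ici y ∨ S ∩ Ici y ⊆ S ∩ Ici x := by
  refine or_iff_not_imp_left.2 fun h => ?_
  obtain ⟨a, ⟨haS, hxa⟩, hya⟩ := not_subset.1 h
  rintro b ⟨hbS, hyb⟩
  refine ⟨hbS, (hS.total haS hbS).elim hxa.trans fun hba => ?_⟩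
  exact absurd ⟨haS, hyb.trans hba⟩ hya

noncomputable def chainRank (S : Set α) (x : α) : ℕ ×ₗ ℕᵒᵈ :=
  toLex ((S ∩ Iic x).ncard, toDual (S ∩ Ici x).ncard)

theorem chainRank_mono (hSf : S.Finite) : Monotone (chainRank S) := fun _ _ hxy =>
  Prod.Lex.toLex_mono
    ⟨ncard_le_ncard (inter_subset_inter_right _ (Iic_subset_Iic.2 hxy))
        (hSf.subset inter_subset_left),
      ncard_le_ncard (inter_subset_inter_right _ (Ici_subset_Ici.2 hxy))
        (hSf.subset inter_subset_left)⟩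

theorem chainRank_lt_of_not_le (hSf : S.Finite) (hS : IsChain (· ≤ ·) S) (hm : m ∈ S)
    (hmx : ¬ m ≤ x) : chainRank S x < chainRank S m := by
  refine Prod.Lex.toLex_lt_toLex.2 <| Or.inl <|
    ncard_lt_ncard ⟨?_, ?_⟩ (hSf.subset inter_subset_left)
  · rintro t ⟨htS, htx⟩
    exact ⟨htS, (hS.total htS hm).resolve_right fun hmt => hmx (hmt.trans htx)⟩
  · exact fun hsub => hmx (hsub ⟨hm, le_rfl⟩).2

theorem not_le_of_chainRank_le (hSf : S.Finite) (hS : IsChain (· ≤ ·) S) (hm : m ∈ S)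
    (hmin : ∀ t ∈ S, ¬ t ≤ x → m ≤ t) (hxm : ¬ x ≤ m) (hz : z ∉ S)
    (h : chainRank S x ≤ chainRank S z) : ¬ z ≤ m := by
  intro hzm
  rcases Prod.Lex.toLex_le_toLex.1 h with hlt | ⟨-, hle⟩
  · -- a `t ∈ S` below `z` but not below `x` gives `m ≤ t ≤ z ≤ m`
    obtain ⟨t, ⟨htS, htz⟩, htx⟩ := not_subset.1 fun hsub =>
      (ncard_le_ncard hsub (hSf.subset inter_subset_left)).not_gt hlt
    exact hz (le_antisymm hzm ((hmin t htS fun h => htx ⟨htS, h⟩).trans htz) ▸ hm)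
  · have hsub : S ∩ Ici z ⊆ S ∩ Ici x := subset_of_ncard_le_of_subset_or_subset
      (hSf.subset inter_subset_left) (hS.inter_Ici_subset_or_subset z x) hle
    exact hxm (hsub ⟨hm, hzm⟩).2

end ChainRank

/-- Lemma on strengthening a partial order. Let `P` be a finite poset and
`S` a chain in `P`. Then the order of `P` can be strengthened to a partial order `r` under
which the complement of `S` is a chain, while every element of `P` that is incomparable with
at least one element of `S` under the original order remains incomparable with at least one
element of `S` under `r`. -/
theorem exists_strengthening_chain_complement (α : Type*) [Fintype α] [PartialOrder α]
    (S : Set α) (hS : IsChain (· ≤ ·) S) :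
    ∃ r : α → α → Prop, IsPartialOrder α r ∧
      (∀ x y : α, x ≤ y → r x y) ∧
      IsChain r Sᶜ ∧
      ∀ x : α, (∃ s ∈ S, ¬ x ≤ s ∧ ¬ s ≤ x) → ∃ s ∈ S, ¬ r x s ∧ ¬ r s x := by
  let ψ : α → (ℕ ×ₗ ℕᵒᵈ) ×ₗ LinearExtension α := fun x =>
    toLex (chainRank S x, toLinearExtension x)
  have hψ : Monotone ψ :=
    Prod.Lex.toLex_mono.comp ((chainRank_mono S.toFinite).prodMk toLinearExtension.monotone)
  have hψ' : Injective ψ := fun x y h => (Prod.ext_iff.1 (toLex.injective h)).2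
  refine ⟨strengthenOn Sᶜ ψ, isPartialOrder_strengthenOn hψ hψ', fun _ _ => strengthenOn_of_le,
    isChain_strengthenOn, ?_⟩
  rintro x ⟨s₀, hs₀, hxs₀, hs₀x⟩
  obtain ⟨m, ⟨hm, hmx⟩, hm_min⟩ :=
    (S.toFinite.subset (sep_subset S fun t => ¬ t ≤ x)).exists_minimal ⟨s₀, hs₀, hs₀x⟩
  have hmin : ∀ t ∈ S, ¬ t ≤ x → m ≤ t := fun t ht htx =>
    (hS.total ht hm).elim (hm_min ⟨ht, htx⟩) id
  have hxm : ¬ x ≤ m := fun h => hxs₀ (h.trans (hmin s₀ hs₀ hs₀x))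
  refine ⟨m, hm, not_strengthenOn_of_forall_not_le hψ hxm fun z hz hxz => ?_, fun hmx' => ?_⟩
  · exact not_le_of_chainRank_le S.toFinite hS hm hmin hxm hz (Prod.Lex.monotone_fst _ _ hxz)
  · exact (hψ.le_of_strengthenOn hmx').not_gt
      (Prod.Lex.toLex_lt_toLex.2 (Or.inl (chainRank_lt_of_not_le S.toFinite hS hm hmx)))
end
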